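/- arXiv:math/0311477 — 4 statements merged into one kernel-verified Lean document; each statement's English description precedes it below -/
import Mathlib

section
/- The symmetrized bidisc G₂ is not biholomorphic to the open unit Euclidean ball B₂ = {(z₁,z₂) ∈ ℂ² : |z₁|² + |z₂|² < 1}: there is no bijective holomorphic map G₂ → B₂ with holomorphic inverse. -/
open Set

noncomputable section

/-- The symmetrization map `π(λ₁,λ₂) = (λ₁+λ₂, λ₁λ₂)`. -/
def symPi (l₁ l₂ : ℂ) : ℂ × ℂ := (l₁ + l₂, l₁ * l₂)

/-- The open unit disc `E ⊂ ℂ`. -/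
def unitDisc : Set ℂ := {z : ℂ | ‖z‖ < 1}

/-- The symmetrized bidisc `G₂ = π(E × E)`. -/
def G2 : Set (ℂ × ℂ) := {w | ∃ l₁ ∈ unitDisc, ∃ l₂ ∈ unitDisc, symPi l₁ l₂ = w}

/-- The royal variety `Σ₂ = {(2λ, λ²) : λ ∈ E}`. -/
def Sigma2 : Set (ℂ × ℂ) := {w | ∃ l ∈ unitDisc, (2 * l, l ^ 2) = w}

/-- `F` is a holomorphic automorphism of the domain `D ⊆ V`: it is holomorphic on `D`,
maps `D` into `D`, and has a holomorphic two-sided inverse on `D`. -/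
def IsAutomorphismOf {V : Type} [NormedAddCommGroup V] [NormedSpace ℂ V]
    (D : Set V) (F : V → V) : Prop :=
  DifferentiableOn ℂ F D ∧ Set.MapsTo F D D ∧
    ∃ G : V → V, DifferentiableOn ℂ G D ∧ Set.MapsTo G D D ∧ Set.InvOn G F D D

/-- The open unit Euclidean ball in `ℂ²`. -/
def euclideanBall2 : Set (ℂ × ℂ) :=
  {z : ℂ × ℂ | ‖z.1‖ ^ 2 + ‖z.2‖ ^ 2 < 1}

/-!
If `F : G₂ → B₂` were biholomorphic, `Φ = F ∘ π` would be a proper holomorphic map of the bidisc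
onto the ball: `|Φ(λ, w)| → 1` as `|λ| → 1`, uniformly in `w`. For fixed `λ` near the unit circle,
`w ↦ Φ(λ, w)` is then a holomorphic disc in `B₂` lying close to the sphere, and the inequality
`|g(c)|² + r²|g'(c)|² ≤ ⨍ |g|²` over circles (applied to both coordinates) forces its derivative to
be small. So `Φ(λ, w₁) - Φ(λ, w₂)` is small near `|λ| = 1`, hence vanishes by the maximum modulus
principle. Thus `Φ` does not depend on `w`, which contradicts the injectivity of `F`.
-/

open Complex Metric Real ComplexConjugate

theorem circleAverage_mul_conj_sub_center {h : ℂ → ℂ} {c : ℂ} {r : ℝ} (hr : 0 < r)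
    (hh : DiffContOnCl ℂ h (ball c r)) :
    circleAverage (fun z => h z * conj (z - c)) c r = r ^ 2 * deriv h c := by
  have hsphere : EqOn (fun z => h z * conj (z - c))
      (fun z => (r : ℂ) ^ 2 • ((z - c)⁻¹ • h z)) (sphere c |r|) := by
    intro z hz
    rw [abs_of_pos hr, mem_sphere_iff_norm] at hz
    have hz0 : z - c ≠ 0 := by rw [← norm_pos_iff, hz]; exact hr
    have : conj (z - c) = r ^ 2 / (z - c) := by
      rw [eq_div_iff hz0, mul_comm, mul_conj, normSq_eq_norm_sq, hz]; push_cast; ring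
    simp only [this, smul_eq_mul]; field_simp
  rw [circleAverage_congr_sphere hsphere, circleAverage_fun_smul,
    circleAverage_eq_circleIntegral hr.ne']
  have hcauchy := hh.deriv_eq_smul_circleIntegral hr
  have hsq : ∀ z : ℂ, (z - c)⁻¹ • (z - c)⁻¹ • h z = (1 / (z - c) ^ 2) • h z := by
    intro z; rw [smul_smul, one_div, sq, mul_inv]
  simp_rw [hsq]
  rw [hcauchy, smul_smul, smul_smul, smul_eq_mul]
  field_simp

theorem circleAverage_mul_conj_affine {h : ℂ → ℂ} {c : ℂ} {r : ℝ} (hr : 0 < r)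
    (hh : DiffContOnCl ℂ h (ball c r)) (a b : ℂ) :
    circleAverage (fun z => h z * conj (a + b * (z - c))) c r
      = conj a * h c + conj b * (r ^ 2 * deriv h c) := by
  have hcont : ContinuousOn h (sphere c r) := hh.continuousOn_ball.mono sphere_subset_closedBall
  have hint₁ : CircleIntegrable (fun z => conj a • h z) c r :=
    ContinuousOn.circleIntegrable hr.le (by fun_prop)
  have hint₂ : CircleIntegrable (fun z => conj b • (h z * conj (z - c))) c r :=
    ContinuousOn.circleIntegrable hr.le (by fun_prop)
  have hsplit : (fun z => h z * conj (a + b * (z - c)))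
      = fun z => conj a • h z + conj b • (h z * conj (z - c)) := by
    ext z; simp only [map_add, map_mul, smul_eq_mul]; ring
  rw [hsplit, circleAverage_fun_add hint₁ hint₂, circleAverage_fun_smul, circleAverage_fun_smul,
    circleAverage_mul_conj_sub_center hr hh, DiffContOnCl.circleAverage (by rwa [abs_of_pos hr]),
    smul_eq_mul, smul_eq_mul]

theorem sq_norm_add_sq_mul_sq_norm_deriv_le_circleAverage {g : ℂ → ℂ} {c : ℂ} {r : ℝ}
    (hr : 0 < r) (hg : DiffContOnCl ℂ g (ball c r)) :
    ‖g c‖ ^ 2 + r ^ 2 * ‖deriv g c‖ ^ 2 ≤ circleAverage (fun z => ‖g z‖ ^ 2) c r := by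
  set a₀ := g c
  set a₁ := deriv g c
  set B : ℂ → ℂ := fun z => a₀ + a₁ * (z - c)
  have hB : HasDerivAt B a₁ c := by
    simpa [B] using ((hasDerivAt_id c).sub_const c).const_mul a₁ |>.const_add a₀
  have hg' : HasDerivAt g a₁ c := (hg.differentiableAt isOpen_ball (mem_ball_self hr)).hasDerivAt
  -- `B` is the first-order Taylor polynomial of `g` at `c`. Averaged against `B̄`, a function is
  -- seen only through its value and derivative at `c`, so `2 g - B` pairs with `B` as `g` does,
  -- while `‖g‖² - Re ((2 g - B) B̄) = ‖g - B‖² ≥ 0`.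
  have hpair : circleAverage (fun z => (2 * g z - B z) * conj (B z)) c r
      = (‖a₀‖ ^ 2 + r ^ 2 * ‖a₁‖ ^ 2 : ℝ) := by
    have hh : DiffContOnCl ℂ (fun z => 2 * g z - B z) (ball c r) :=
      (hg.const_smul (2 : ℂ)).sub (by fun_prop : Differentiable ℂ B).diffContOnCl
    have hd : HasDerivAt (fun z => 2 * g z - B z) (2 * a₁ - a₁) c := (hg'.const_mul 2).sub hB
    rw [circleAverage_mul_conj_affine hr hh, hd.deriv]
    simp only [B, sub_self, mul_zero, add_zero]
    push_cast
    rw [← Complex.conj_mul', ← Complex.conj_mul']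
    ring
  have hcont : ContinuousOn g (sphere c r) := hg.continuousOn_ball.mono sphere_subset_closedBall
  calc ‖a₀‖ ^ 2 + r ^ 2 * ‖a₁‖ ^ 2
      = circleAverage (fun z => ((2 * g z - B z) * conj (B z)).re) c r := by
        have hre := reCLM.circleAverage_comp_comm
          (ContinuousOn.circleIntegrable hr.le (by fun_prop) :
            CircleIntegrable (fun z => (2 * g z - B z) * conj (B z)) c r)
        rw [hpair, reCLM_apply, ofReal_re] at hre
        exact hre.symm
    _ ≤ circleAverage (fun z => ‖g z‖ ^ 2) c r := by
        refine circleAverage_mono (ContinuousOn.circleIntegrable hr.le (by fun_prop))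
          (ContinuousOn.circleIntegrable hr.le (by fun_prop)) fun z _ => ?_
        have hsq : ‖g z - B z‖ ^ 2 = ‖g z‖ ^ 2 - ((2 * g z - B z) * conj (B z)).re := by
          simp only [Complex.sq_norm, normSq_apply, sub_re, sub_im, mul_re, mul_im, re_ofNat,
            im_ofNat, conj_re, conj_im, zero_mul, sub_zero, add_zero, mul_neg, sub_neg_eq_add]
          ring
        nlinarith [sq_nonneg ‖g z - B z‖]

def euclidNormSq (z : ℂ × ℂ) : ℝ := ‖z.1‖ ^ 2 + ‖z.2‖ ^ 2

theorem sq_norm_le_euclidNormSq (z : ℂ × ℂ) : ‖z‖ ^ 2 ≤ euclidNormSq z := by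
  rw [Prod.norm_def, euclidNormSq]
  rcases le_total ‖z.1‖ ‖z.2‖ with h | h
  · rw [max_eq_right h]; exact le_add_of_nonneg_left (sq_nonneg _)
  · rw [max_eq_left h]; exact le_add_of_nonneg_right (sq_nonneg _)

theorem sq_mul_euclidNormSq_deriv_le {f : ℂ → ℂ × ℂ} {c : ℂ} {r : ℝ} (hr : 0 < r)
    (hf : DiffContOnCl ℂ f (ball c r)) (hle : ∀ z ∈ sphere c r, euclidNormSq (f z) ≤ 1) :
    r ^ 2 * euclidNormSq (deriv f c) ≤ 1 - euclidNormSq (f c) := by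
  have hfc : HasDerivAt f (deriv f c) c :=
    (hf.differentiableAt isOpen_ball (mem_ball_self hr)).hasDerivAt
  have h₁ := sq_norm_add_sq_mul_sq_norm_deriv_le_circleAverage hr
    ((ContinuousLinearMap.fst ℂ ℂ ℂ).differentiable.comp_diffContOnCl hf)
  have h₂ := sq_norm_add_sq_mul_sq_norm_deriv_le_circleAverage hr
    ((ContinuousLinearMap.snd ℂ ℂ ℂ).differentiable.comp_diffContOnCl hf)
  rw [((ContinuousLinearMap.fst ℂ ℂ ℂ).hasFDerivAt.comp_hasDerivAt c hfc).deriv] at h₁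
  rw [((ContinuousLinearMap.snd ℂ ℂ ℂ).hasFDerivAt.comp_hasDerivAt c hfc).deriv] at h₂
  have hcont : ContinuousOn f (sphere c r) := hf.continuousOn_ball.mono sphere_subset_closedBall
  have havg : circleAverage (fun z => euclidNormSq (f z)) c r ≤ 1 :=
    circleAverage_mono_on_of_le_circle (ContinuousOn.circleIntegrable hr.le
      (by unfold euclidNormSq; fun_prop)) (by rwa [abs_of_pos hr])
  unfold euclidNormSq at havg ⊢
  rw [circleAverage_fun_add (ContinuousOn.circleIntegrable hr.le (by fun_prop))
    (ContinuousOn.circleIntegrable hr.le (by fun_prop))] at havg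
  simp only [Function.comp_def, ContinuousLinearMap.coe_fst', ContinuousLinearMap.coe_snd'] at h₁ h₂
  linarith

theorem norm_deriv_le_of_one_sub_euclidNormSq_le {f : ℂ → ℂ × ℂ} {c : ℂ} {r ε : ℝ} (hr : 0 < r)
    (hf : DiffContOnCl ℂ f (ball c r)) (hle : ∀ z ∈ sphere c r, euclidNormSq (f z) ≤ 1)
    (hε : 1 - ε ≤ euclidNormSq (f c)) :
    ‖deriv f c‖ ≤ √ε / r := by
  have hsq : ‖deriv f c‖ ^ 2 ≤ ε / r ^ 2 := by
    rw [le_div_iff₀ (by positivity)]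
    nlinarith [sq_norm_le_euclidNormSq (deriv f c), sq_mul_euclidNormSq_deriv_le hr hf hle]
  calc ‖deriv f c‖ = √(‖deriv f c‖ ^ 2) := (Real.sqrt_sq (norm_nonneg _)).symm
    _ ≤ √(ε / r ^ 2) := Real.sqrt_le_sqrt hsq
    _ = √ε / r := by rw [Real.sqrt_div' _ (by positivity), Real.sqrt_sq hr.le]

theorem norm_sub_le_of_forall_one_sub_euclidNormSq_le {f : ℂ → ℂ × ℂ} {ε ρ : ℝ}
    (hf : DifferentiableOn ℂ f (ball 0 1)) (hle : ∀ z ∈ ball 0 1, euclidNormSq (f z) ≤ 1)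
    (hε : ∀ z ∈ ball 0 1, 1 - ε ≤ euclidNormSq (f z)) (hρ : ρ < 1) {x₁ x₂ : ℂ}
    (hx₁ : x₁ ∈ closedBall 0 ρ) (hx₂ : x₂ ∈ closedBall 0 ρ) :
    ‖f x₁ - f x₂‖ ≤ 2 * √ε / (1 - ρ) * ‖x₁ - x₂‖ := by
  set r := (1 - ρ) / 2
  have hr : 0 < r := by simp only [r]; linarith
  have hsub : ∀ x ∈ closedBall (0 : ℂ) ρ, closedBall x r ⊆ ball 0 1 := by
    intro x hx
    refine (closedBall_subset_closedBall' ?_).trans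
      (closedBall_subset_ball (by simp only [r]; linarith : ρ + r < 1))
    rw [mem_closedBall] at hx
    linarith
  have hderiv : ∀ x ∈ closedBall (0 : ℂ) ρ, ‖deriv f x‖ ≤ 2 * √ε / (1 - ρ) := by
    intro x hx
    have hball : x ∈ ball (0 : ℂ) 1 := hsub x hx (mem_closedBall_self hr.le)
    convert norm_deriv_le_of_one_sub_euclidNormSq_le hr (hf.diffContOnCl_ball (hsub x hx))
      (fun z hz => hle z (hsub x hx (sphere_subset_closedBall hz))) (hε x hball) using 1
    simp only [r]; field_simp
  exact Convex.norm_image_sub_le_of_norm_deriv_le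
    (fun x hx => hf.differentiableAt (isOpen_ball.mem_nhds (hsub x hx (mem_closedBall_self hr.le))))
    hderiv (convex_closedBall 0 ρ) hx₂ hx₁

theorem eqOn_zero_of_forall_norm_le_near_sphere {E : Type*} [NormedAddCommGroup E]
    [NormedSpace ℂ E] {ψ : ℂ → E} (hψ : DifferentiableOn ℂ ψ (ball 0 1))
    (hsmall : ∀ δ > 0, ∃ M < 1, ∀ l : ℂ, M < ‖l‖ → ‖l‖ < 1 → ‖ψ l‖ ≤ δ) :
    EqOn ψ 0 (ball 0 1) := by
  intro l₀ hl₀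
  rw [mem_ball_zero_iff] at hl₀
  refine norm_le_zero_iff.1 (le_of_forall_pos_le_add fun δ hδ => ?_)
  obtain ⟨M, hM, hM_small⟩ := hsmall δ hδ
  set t := (max ‖l₀‖ M + 1) / 2
  have ht : ‖l₀‖ < t ∧ M < t ∧ t < 1 := by
    refine ⟨?_, ?_, ?_⟩ <;> simp only [t] <;> linarith [le_max_left ‖l₀‖ M, le_max_right ‖l₀‖ M,
      max_lt hl₀ hM]
  have ht₀ : 0 < t := (norm_nonneg l₀).trans_lt ht.1
  rw [zero_add]
  refine Complex.norm_le_of_forall_mem_frontier_norm_le isBounded_ball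
    (hψ.diffContOnCl_ball (closedBall_subset_ball ht.2.2)) (fun z hz => ?_)
    (subset_closure (mem_ball_zero_iff.2 ht.1))
  rw [frontier_ball 0 ht₀.ne', mem_sphere_zero_iff_norm] at hz
  exact hM_small z (hz ▸ ht.2.1) (hz ▸ ht.2.2)

theorem symPi_comm (l m : ℂ) : symPi l m = symPi m l := by
  simp only [symPi, add_comm, mul_comm]

theorem symPi_mem_G2 {l m : ℂ} (hl : ‖l‖ < 1) (hm : ‖m‖ < 1) : symPi l m ∈ G2 :=
  ⟨l, hl, m, hm, rfl⟩

theorem norm_lt_one_of_symPi_mem_G2 {l m : ℂ} (h : symPi l m ∈ G2) : ‖l‖ < 1 ∧ ‖m‖ < 1 := by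
  obtain ⟨l₁, h₁, l₂, h₂, he⟩ := h
  simp only [symPi, Prod.mk.injEq] at he
  have hroot : ∀ x, (x - l₁) * (x - l₂) = (x - l) * (x - m) := fun x => by
    linear_combination (-x) * he.1 + he.2
  have hmem : ∀ x, (x - l) * (x - m) = 0 → ‖x‖ < 1 := fun x hx => by
    rcases mul_eq_zero.1 ((hroot x).trans hx) with h | h
    · rwa [sub_eq_zero.1 h]
    · rwa [sub_eq_zero.1 h]
  exact ⟨hmem l (by ring), hmem m (by ring)⟩

theorem differentiableOn_symPi_left {F : ℂ × ℂ → ℂ × ℂ} (hF : DifferentiableOn ℂ F G2) {m : ℂ}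
    (hm : ‖m‖ < 1) : DifferentiableOn ℂ (fun l => F (symPi l m)) (ball 0 1) :=
  hF.comp (by unfold symPi; fun_prop) fun l hl => symPi_mem_G2 (mem_ball_zero_iff.1 hl) hm

theorem exists_lt_one_of_isClosed_subset_G2 {Q : Set (ℂ × ℂ)} (hQ : IsClosed Q) (hQG : Q ⊆ G2) :
    ∃ M < 1, ∀ l m : ℂ, symPi l m ∈ Q → ‖l‖ < M := by
  have hsub : (fun z : ℂ × ℂ => symPi z.1 z.2) ⁻¹' Q ⊆ ball 0 1 := fun z hz => by
    rw [mem_ball_zero_iff, Prod.norm_def]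
    exact max_lt_iff.2 (norm_lt_one_of_symPi_mem_G2 (hQG hz))
  obtain ⟨M, hM, hQM⟩ := exists_pos_lt_subset_ball one_pos
    (hQ.preimage (by unfold symPi; fun_prop)) hsub
  refine ⟨M, hM.2, fun l m hlm => ?_⟩
  have h := hQM (show (l, m) ∈ _ from hlm)
  rw [mem_ball_zero_iff] at h
  exact (norm_fst_le (l, m)).trans_lt h

theorem exists_lt_one_forall_one_sub_lt_euclidNormSq {F G : ℂ × ℂ → ℂ × ℂ}
    (hG : ContinuousOn G euclideanBall2) (hGB : MapsTo G euclideanBall2 G2)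
    (hGF : LeftInvOn G F G2) {ε : ℝ} (hε : 0 < ε) :
    ∃ M < 1, ∀ l m : ℂ, ‖l‖ < 1 → ‖m‖ < 1 → M < ‖l‖ →
      1 - ε < euclidNormSq (F (symPi l m)) := by
  set K := {w : ℂ × ℂ | euclidNormSq w ≤ 1 - ε}
  have hKB : K ⊆ euclideanBall2 := fun w (hw : euclidNormSq w ≤ 1 - ε) =>
    show euclidNormSq w < 1 by linarith
  have hK : IsCompact K := by
    refine Metric.isCompact_of_isClosed_isBounded
      (isClosed_le (by unfold euclidNormSq; fun_prop) continuous_const)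
      ((isBounded_closedBall (x := 0) (r := 1)).subset fun w (hw : euclidNormSq w ≤ 1 - ε) => ?_)
    rw [mem_closedBall_zero_iff]
    nlinarith [sq_norm_le_euclidNormSq w, norm_nonneg w]
  obtain ⟨M, hM, hQM⟩ := exists_lt_one_of_isClosed_subset_G2
    (hK.image_of_continuousOn (hG.mono hKB)).isClosed (hGB.mono_left hKB).image_subset
  refine ⟨M, hM, fun l m hl hm hMl => lt_of_not_ge fun hFK => hMl.not_gt (hQM l m ?_)⟩
  rw [← hGF (symPi_mem_G2 hl hm)]
  exact mem_image_of_mem G hFK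

theorem apply_symPi_eq_of_biholomorphic {F G : ℂ × ℂ → ℂ × ℂ} (hF : DifferentiableOn ℂ F G2)
    (hG : ContinuousOn G euclideanBall2) (hbij : BijOn F G2 euclideanBall2)
    (hinv : InvOn G F G2 euclideanBall2) {l x₁ x₂ : ℂ} (hl : ‖l‖ < 1) (h₁ : ‖x₁‖ < 1)
    (h₂ : ‖x₂‖ < 1) : F (symPi l x₁) = F (symPi l x₂) := by
  set ρ := max ‖x₁‖ ‖x₂‖
  have hρ : ρ < 1 := max_lt h₁ h₂
  have hρ' : 0 < 1 - ρ := sub_pos.2 hρ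
  have hψ := (differentiableOn_symPi_left hF h₁).sub (differentiableOn_symPi_left hF h₂)
  refine sub_eq_zero.1 (eqOn_zero_of_forall_norm_le_near_sphere hψ (fun δ hδ => ?_)
    (mem_ball_zero_iff.2 hl))
  obtain ⟨M, hM, hM_near⟩ :=
    exists_lt_one_forall_one_sub_lt_euclidNormSq (ε := (δ * (1 - ρ) / 4) ^ 2) hG
      (hinv.1.mapsTo hbij.surjOn) hinv.1 (by positivity)
  refine ⟨M, hM, fun l' hMl' hl' => ?_⟩
  have hslice : DifferentiableOn ℂ (fun w => F (symPi l' w)) (ball 0 1) := by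
    simpa only [symPi_comm l'] using differentiableOn_symPi_left hF hl'
  have hbound := norm_sub_le_of_forall_one_sub_euclidNormSq_le hslice
    (fun w hw => (hbij.mapsTo (symPi_mem_G2 hl' (mem_ball_zero_iff.1 hw))).le)
    (fun w hw => (hM_near l' w hl' (mem_ball_zero_iff.1 hw) hMl').le) hρ
    (mem_closedBall_zero_iff.2 (le_max_left _ _)) (mem_closedBall_zero_iff.2 (le_max_right _ _))
  rw [Real.sqrt_sq (by positivity)] at hbound
  calc ‖F (symPi l' x₁) - F (symPi l' x₂)‖
      ≤ δ / 2 * ‖x₁ - x₂‖ := by convert hbound using 2; field_simp; ring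
    _ ≤ δ / 2 * 2 := by gcongr; exact (norm_sub_le x₁ x₂).trans (by linarith)
    _ = δ := by ring

/-- the symmetrized bidisc `G₂` is not biholomorphic to the
Euclidean ball `B₂`. -/
theorem G2_not_biholomorphic_to_ball :
    ¬ ∃ F G : ℂ × ℂ → ℂ × ℂ,
        DifferentiableOn ℂ F G2 ∧ DifferentiableOn ℂ G euclideanBall2 ∧
        Set.BijOn F G2 euclideanBall2 ∧ Set.InvOn G F G2 euclideanBall2 := by
  rintro ⟨F, G, hF, hG, hbij, hinv⟩
  have h0 : ‖(0 : ℂ)‖ < 1 := by simp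
  have hhalf : ‖(1 / 2 : ℂ)‖ < 1 := by norm_num
  have hF_eq := apply_symPi_eq_of_biholomorphic hF hG.continuousOn hbij hinv h0 hhalf h0
  have := congrArg Prod.fst (hbij.injOn (symPi_mem_G2 h0 hhalf) (symPi_mem_G2 h0 h0) hF_eq)
  norm_num [symPi] at this
end
end

section
/- The group Aut(G₂) does not act transitively on G₂; that is, there exist points z, w ∈ G₂ such that no holomorphic automorphism F of G₂ satisfies F(z) = w. In particular, the symmetrized bidisc is an inhomogeneous domain. -/
open Set

noncomputable section

/-!
Compare the origin with `w₀ = (0, 1/4) = π(i/2, -i/2)`. For `|ω| = 1` the functions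
`Φ_ω(s, p) = (2ωp - s) / (2 - ωs)` map `G₂` into the disc, so by Schwarz–Pick they bound the
derivative of a holomorphic self-map of `G₂` along analytic discs. Suppose an automorphism `F`
sends `0` to `w₀` and let `L = F'(0)`. The royal disc `λ ↦ (2λ, λ²)` and the flat disc
`λ ↦ (0, λ)` through `0` give `|Φ_ω'(w₀)(L x)| ≤ (15/16) N(x)` with `N(x) = |x₁|/2 + |x₂|`, while
the inverse `F⁻¹` and discs through `w₀` give `N(L⁻¹ u) ≤ 1` for every tangent `u` of such a disc.
If moreover `|Φ_ω'(w₀) u| = 15/16` for two values of `ω`, strict convexity of the disc makes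
`L⁻¹ u` an extreme point of the unit ball of `N`, i.e. a point of a coordinate axis. There are
three pairwise independent such directions `u`, so two of them would be images under `L` of the
same axis.
-/

open Metric ComplexConjugate Topology Complex

namespace SymmetrizedBidisc

def mobius (a z : ℂ) : ℂ := (z + a) / (1 + conj a * z)

lemma normSq_one_add_conj_mul_sub_normSq_add (a z : ℂ) :
    normSq (1 + conj a * z) - normSq (z + a) = (1 - normSq a) * (1 - normSq z) := by
  simp only [normSq_apply, add_re, add_im, mul_re, mul_im, one_re, one_im, conj_re, conj_im]
  ring

lemma one_add_conj_mul_ne_zero {a z : ℂ} (ha : ‖a‖ < 1) (hz : ‖z‖ < 1) : 1 + conj a * z ≠ 0 := by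
  intro h
  have : ‖conj a * z‖ = 1 := by rw [← neg_eq_of_add_eq_zero_right h, norm_neg, norm_one]
  rw [norm_mul, norm_conj] at this
  nlinarith [norm_nonneg a, norm_nonneg z]

lemma norm_mobius_lt_one {a z : ℂ} (ha : ‖a‖ < 1) (hz : ‖z‖ < 1) : ‖mobius a z‖ < 1 := by
  rw [mobius, norm_div, div_lt_one (norm_pos_iff.2 (one_add_conj_mul_ne_zero ha hz)),
    ← sq_lt_sq₀ (norm_nonneg _) (norm_nonneg _), Complex.sq_norm, Complex.sq_norm, ← sub_pos,
    normSq_one_add_conj_mul_sub_normSq_add, ← Complex.sq_norm, ← Complex.sq_norm]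
  exact mul_pos (by nlinarith [norm_nonneg a]) (by nlinarith [norm_nonneg z])

lemma mapsTo_mobius {a : ℂ} (ha : ‖a‖ < 1) : MapsTo (mobius a) (ball 0 1) (ball 0 1) :=
  fun _ hz => mem_ball_zero_iff.2 (norm_mobius_lt_one ha (mem_ball_zero_iff.1 hz))

lemma hasDerivAt_mobius {a z : ℂ} (h : 1 + conj a * z ≠ 0) :
    HasDerivAt (mobius a) ((1 - conj a * a) / (1 + conj a * z) ^ 2) z :=
  ((hasDerivAt_id' z).add_const a).fun_div
    (((hasDerivAt_id' z).const_mul (conj a)).const_add 1) h |>.congr_deriv (by ring)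

lemma differentiableOn_mobius {a : ℂ} (ha : ‖a‖ < 1) : DifferentiableOn ℂ (mobius a) (ball 0 1) :=
  fun _ hz => (hasDerivAt_mobius (one_add_conj_mul_ne_zero ha
    (mem_ball_zero_iff.1 hz))).differentiableAt.differentiableWithinAt

lemma mobius_zero (a : ℂ) : mobius a 0 = a := by simp [mobius]

lemma mobius_neg_self (a : ℂ) : mobius (-a) a = 0 := by simp [mobius]

lemma hasDerivAt_mobius_mul_zero (a e : ℂ) :
    HasDerivAt (fun t => mobius a (e * t)) (e * (1 - conj a * a)) 0 :=
  (hasDerivAt_mobius (a := a) (z := e * 0) (by simp)).comp 0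
    ((hasDerivAt_id (0 : ℂ)).const_mul e) |>.congr_deriv (by simp [mul_comm])

lemma mapsTo_mul_ball {e : ℂ} (he : ‖e‖ = 1) : MapsTo (e * ·) (ball 0 1) (ball 0 1) := by
  intro t ht
  simpa [he] using ht

theorem norm_deriv_le_one_sub_sq {f : ℂ → ℂ} (hf : DifferentiableOn ℂ f (ball 0 1))
    (hfb : MapsTo f (ball 0 1) (ball 0 1)) : ‖deriv f 0‖ ≤ 1 - ‖f 0‖ ^ 2 := by
  set a := f 0
  have ha : ‖a‖ < 1 := mem_ball_zero_iff.1 (hfb (mem_ball_self one_pos))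
  have hna : ‖-a‖ < 1 := by rwa [norm_neg]
  have hpos : 0 < 1 - ‖a‖ ^ 2 := by nlinarith [norm_nonneg a]
  have hne : (1 : ℂ) - (‖a‖ ^ 2 : ℝ) ≠ 0 := by exact_mod_cast hpos.ne'
  -- `m_{-a} ∘ f` fixes the origin, so the Schwarz lemma applies to it.
  have hg := (hasDerivAt_mobius (one_add_conj_mul_ne_zero hna ha)).comp 0
    (hf.differentiableAt (ball_mem_nhds 0 one_pos)).hasDerivAt
  have hg' : deriv (mobius (-a) ∘ f) 0 = deriv f 0 / (1 - (‖a‖ ^ 2 : ℝ)) := by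
    rw [hg.deriv, map_neg, neg_mul_neg, neg_mul, conj_mul', ofReal_pow, ← sub_eq_add_neg]
    field_simp
  have hmaps : MapsTo (mobius (-a) ∘ f) (ball 0 1) (closedBall ((mobius (-a) ∘ f) 0) 1) := by
    intro t ht
    rw [Function.comp_apply, mobius_neg_self, mem_closedBall_zero_iff]
    exact (norm_mobius_lt_one hna (mem_ball_zero_iff.1 (hfb ht))).le
  have := norm_deriv_le_one_of_mapsTo_ball ((differentiableOn_mobius hna).comp hf hfb) hmaps one_pos
  rwa [hg', norm_div, div_le_one (norm_pos_iff.2 hne), ← ofReal_one, ← ofReal_sub,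
    Complex.norm_of_nonneg hpos.le] at this

lemma norm_fst_lt_two_of_mem_G2 {z : ℂ × ℂ} (hz : z ∈ G2) : ‖z.1‖ < 2 := by
  obtain ⟨l₁, h₁, l₂, h₂, rfl⟩ := hz
  calc ‖l₁ + l₂‖ ≤ ‖l₁‖ + ‖l₂‖ := norm_add_le _ _
    _ < 2 := add_lt_add h₁ h₂ |>.trans_eq one_add_one_eq_two

lemma norm_lt_one_of_norm_add_add_norm_mul_lt_one {l₁ l₂ : ℂ} (h : ‖l₁ + l₂‖ + ‖l₁ * l₂‖ < 1) :
    ‖l₁‖ < 1 := by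
  by_contra! h₁
  have := norm_sub_norm_le l₁ (-l₂)
  rw [norm_neg, sub_neg_eq_add] at this
  rw [norm_mul] at h
  nlinarith [norm_nonneg l₂]

lemma mem_G2_of_norm_add_norm_lt_one {z : ℂ × ℂ} (h : ‖z.1‖ + ‖z.2‖ < 1) : z ∈ G2 := by
  obtain ⟨d, hd⟩ := IsAlgClosed.exists_eq_mul_self (z.1 ^ 2 - 4 * z.2)
  have hsum : (z.1 + d) / 2 + (z.1 - d) / 2 = z.1 := by ring
  have hprod : (z.1 + d) / 2 * ((z.1 - d) / 2) = z.2 := by linear_combination hd / 4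
  refine ⟨(z.1 + d) / 2, ?_, (z.1 - d) / 2, ?_, Prod.ext hsum hprod⟩
  · exact norm_lt_one_of_norm_add_add_norm_mul_lt_one (by rwa [hsum, hprod])
  · exact norm_lt_one_of_norm_add_add_norm_mul_lt_one (l₂ := (z.1 + d) / 2)
      (by rwa [add_comm ((z.1 - d) / 2), mul_comm ((z.1 - d) / 2), hsum, hprod])

lemma G2_mem_nhds {z : ℂ × ℂ} (h : ‖z.1‖ + ‖z.2‖ < 1) : G2 ∈ 𝓝 z :=
  Filter.mem_of_superset
    ((isOpen_lt (f := fun z : ℂ × ℂ => ‖z.1‖ + ‖z.2‖) (by fun_prop) continuous_const).mem_nhds h)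
    fun _ => mem_G2_of_norm_add_norm_lt_one

def Phi (ω : ℂ) (z : ℂ × ℂ) : ℂ := (2 * ω * z.2 - z.1) / (2 - ω * z.1)

lemma norm_two_mul_mul_sub_sub_lt {a b : ℂ} (ha : ‖a‖ < 1) (hb : ‖b‖ < 1) :
    ‖2 * a * b - a - b‖ < ‖2 - a - b‖ := by
  replace ha : normSq a < 1 := by rw [← Complex.sq_norm]; nlinarith [norm_nonneg a]
  replace hb : normSq b < 1 := by rw [← Complex.sq_norm]; nlinarith [norm_nonneg b]
  rw [← sq_lt_sq₀ (norm_nonneg _) (norm_nonneg _), Complex.sq_norm, Complex.sq_norm]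
  simp only [normSq_apply, sub_re, sub_im, mul_re, mul_im, re_ofNat, im_ofNat] at ha hb ⊢
  have hxa : a.re < 1 := by nlinarith
  have hxb : b.re < 1 := by nlinarith
  -- with `A = |a|²`, `B = |b|²` the difference of the squares is
  -- `2 (1 - B) (1 + A - 2 Re a) + 2 (1 - A) (1 + B - 2 Re b)`
  nlinarith [mul_pos (sub_pos.2 hb) (by nlinarith : 0 < 1 + (a.re * a.re + a.im * a.im) - 2 * a.re),
    mul_pos (sub_pos.2 ha) (by nlinarith : 0 < 1 + (b.re * b.re + b.im * b.im) - 2 * b.re)]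

lemma norm_Phi_lt_one {ω : ℂ} (hω : ‖ω‖ = 1) {z : ℂ × ℂ} (hz : z ∈ G2) : ‖Phi ω z‖ < 1 := by
  obtain ⟨l₁, h₁, l₂, h₂, rfl⟩ := hz
  have key := norm_two_mul_mul_sub_sub_lt (a := ω * l₁) (b := ω * l₂)
    (by rwa [norm_mul, hω, one_mul]) (by rwa [norm_mul, hω, one_mul])
  rw [show 2 * (ω * l₁) * (ω * l₂) - ω * l₁ - ω * l₂ = ω * (2 * ω * (l₁ * l₂) - (l₁ + l₂)) by ring,
    norm_mul, hω, one_mul, show 2 - ω * l₁ - ω * l₂ = 2 - ω * (l₁ + l₂) by ring] at key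
  rw [Phi, norm_div]
  exact (div_lt_one ((norm_nonneg _).trans_lt key)).2 key

lemma two_sub_mul_fst_ne_zero {ω : ℂ} (hω : ‖ω‖ = 1) {z : ℂ × ℂ} (hz : z ∈ G2) :
    2 - ω * z.1 ≠ 0 := by
  rw [sub_ne_zero]
  refine fun h => (norm_fst_lt_two_of_mem_G2 hz).ne ?_
  rw [← one_mul ‖z.1‖, ← hω, ← norm_mul, ← h, norm_ofNat]

lemma differentiableOn_Phi {ω : ℂ} (hω : ‖ω‖ = 1) : DifferentiableOn ℂ (Phi ω) G2 := by
  intro z hz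
  unfold Phi
  fun_prop (disch := exact two_sub_mul_fst_ne_zero hω hz)

def phiDeriv (ω : ℂ) (z : ℂ × ℂ) : ℂ × ℂ →L[ℂ] ℂ :=
  ((2 * ω ^ 2 * z.2 - 2) / (2 - ω * z.1) ^ 2) • ContinuousLinearMap.fst ℂ ℂ ℂ +
    (2 * ω / (2 - ω * z.1)) • ContinuousLinearMap.snd ℂ ℂ ℂ

lemma phiDeriv_apply (ω : ℂ) (z v : ℂ × ℂ) :
    phiDeriv ω z v =
      (2 * ω ^ 2 * z.2 - 2) / (2 - ω * z.1) ^ 2 * v.1 + 2 * ω / (2 - ω * z.1) * v.2 :=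
  rfl

lemma hasDerivAt_Phi_comp {ω t : ℂ} {γ : ℂ → ℂ × ℂ} {v : ℂ × ℂ} (hγ : HasDerivAt γ v t)
    (h : 2 - ω * (γ t).1 ≠ 0) : HasDerivAt (fun t => Phi ω (γ t)) (phiDeriv ω (γ t) v) t := by
  have h₁ : HasDerivAt (fun t => (γ t).1) v.1 t :=
    (hasFDerivAt_fst (𝕜 := ℂ) (p := γ t)).comp_hasDerivAt t hγ
  have h₂ : HasDerivAt (fun t => (γ t).2) v.2 t :=
    (hasFDerivAt_snd (𝕜 := ℂ) (p := γ t)).comp_hasDerivAt t hγ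
  refine ((h₂.const_mul (2 * ω)).fun_sub h₁).fun_div ((h₁.const_mul ω).const_sub 2) h
    |>.congr_deriv ?_
  rw [phiDeriv_apply]
  field_simp
  ring

structure IsAnalyticDisc (χ : ℂ → ℂ × ℂ) (z v : ℂ × ℂ) : Prop where
  differentiableOn : DifferentiableOn ℂ χ (ball 0 1)
  mapsTo : MapsTo χ (ball 0 1) G2
  map_zero : χ 0 = z
  hasDerivAt : HasDerivAt χ v 0

theorem norm_phiDeriv_le {H : ℂ × ℂ → ℂ × ℂ} {L : ℂ × ℂ →L[ℂ] ℂ × ℂ} {χ : ℂ → ℂ × ℂ}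
    {z v : ℂ × ℂ} {ω : ℂ} (hH : DifferentiableOn ℂ H G2) (hHG : MapsTo H G2 G2)
    (hL : HasFDerivAt H L z) (hχ : IsAnalyticDisc χ z v) (hω : ‖ω‖ = 1) :
    ‖phiDeriv ω (H z) (L v)‖ ≤ 1 - ‖Phi ω (H z)‖ ^ 2 := by
  have hf : DifferentiableOn ℂ (fun t => Phi ω (H (χ t))) (ball 0 1) :=
    (differentiableOn_Phi hω).comp (hH.comp hχ.differentiableOn hχ.mapsTo) (hHG.comp hχ.mapsTo)
  have hfb : MapsTo (fun t => Phi ω (H (χ t))) (ball 0 1) (ball 0 1) := fun t ht =>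
    mem_ball_zero_iff.2 (norm_Phi_lt_one hω (hHG (hχ.mapsTo ht)))
  have hz : z ∈ G2 := hχ.map_zero ▸ hχ.mapsTo (mem_ball_self one_pos)
  have hHχ : HasDerivAt (fun t => H (χ t)) (L v) 0 :=
    (hχ.map_zero ▸ hL).comp_hasDerivAt 0 hχ.hasDerivAt
  have hderiv := hasDerivAt_Phi_comp (ω := ω) hHχ
    (by rw [hχ.map_zero]; exact two_sub_mul_fst_ne_zero hω (hHG hz))
  simpa [hderiv.deriv, hχ.map_zero] using norm_deriv_le_one_sub_sq hf hfb

lemma isAnalyticDisc_symPi {f g : ℂ → ℂ} {f' g' : ℂ} (hf : DifferentiableOn ℂ f (ball 0 1))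
    (hfb : MapsTo f (ball 0 1) (ball 0 1)) (hf' : HasDerivAt f f' 0)
    (hg : DifferentiableOn ℂ g (ball 0 1)) (hgb : MapsTo g (ball 0 1) (ball 0 1))
    (hg' : HasDerivAt g g' 0) :
    IsAnalyticDisc (fun t => symPi (f t) (g t)) (symPi (f 0) (g 0))
      (f' + g', f' * g 0 + f 0 * g') where
  differentiableOn := (hf.add hg).prodMk (hf.mul hg)
  mapsTo _ ht := ⟨_, mem_ball_zero_iff.1 (hfb ht), _, mem_ball_zero_iff.1 (hgb ht), rfl⟩
  map_zero := rfl
  hasDerivAt := (hf'.add hg').prodMk (hf'.mul hg')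

lemma isAnalyticDisc_zero_prod {f : ℂ → ℂ} {f' : ℂ} (hf : DifferentiableOn ℂ f (ball 0 1))
    (hfb : MapsTo f (ball 0 1) (ball 0 1)) (hf' : HasDerivAt f f' 0) :
    IsAnalyticDisc (fun t => (0, f t)) (0, f 0) (0, f') where
  differentiableOn := (differentiableOn_const 0).prodMk hf
  mapsTo _ ht := mem_G2_of_norm_add_norm_lt_one (by simpa using hfb ht)
  map_zero := rfl
  hasDerivAt := (hasDerivAt_const 0 0).prodMk hf'

lemma isAnalyticDisc_royal : IsAnalyticDisc (fun t => symPi t t) 0 (2, 0) := by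
  simpa [symPi, one_add_one_eq_two, Prod.mk_zero_zero] using
    isAnalyticDisc_symPi differentiableOn_id (mapsTo_id _) (hasDerivAt_id 0)
      differentiableOn_id (mapsTo_id _) (hasDerivAt_id 0)

lemma isAnalyticDisc_zero_prod_id : IsAnalyticDisc (fun t => (0, t)) 0 (0, 1) :=
  isAnalyticDisc_zero_prod differentiableOn_id (mapsTo_id _) (hasDerivAt_id 0)

local notation "w₀" => ((0 : ℂ), (1 / 4 : ℂ))

lemma isAnalyticDisc_zero_prod_mobius :
    IsAnalyticDisc (fun t => (0, mobius (1 / 4) t)) w₀ (0, 15 / 16) := by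
  have ha : ‖(1 / 4 : ℂ)‖ < 1 := by norm_num
  have := isAnalyticDisc_zero_prod (differentiableOn_mobius ha) (mapsTo_mobius ha)
    (hasDerivAt_mobius (z := 0) (by simp))
  convert this using 2 <;> norm_num [mobius_zero, map_ofNat]

lemma isAnalyticDisc_quarter {e : ℂ} (he : ‖e‖ = 1) :
    IsAnalyticDisc (fun t => symPi (mobius (I / 2) (e * t)) (mobius (-(I / 2)) (conj e * t))) w₀
      (3 / 4 * (e + conj e), 3 / 8 * I * (conj e - e)) := by
  have ha : ‖I / 2‖ < 1 := by norm_num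
  have ha' : ‖-(I / 2)‖ < 1 := by rwa [norm_neg]
  have hce : ‖conj e‖ = 1 := by rwa [norm_conj]
  have hdisc := isAnalyticDisc_symPi
    ((differentiableOn_mobius ha).comp (differentiableOn_id.const_mul e) (mapsTo_mul_ball he))
    ((mapsTo_mobius ha).comp (mapsTo_mul_ball he)) (hasDerivAt_mobius_mul_zero _ e)
    ((differentiableOn_mobius ha').comp (differentiableOn_id.const_mul _) (mapsTo_mul_ball hce))
    ((mapsTo_mobius ha').comp (mapsTo_mul_ball hce)) (hasDerivAt_mobius_mul_zero _ (conj e))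
  have hc : conj (I / 2) * (I / 2) = 1 / 4 := by
    rw [map_div₀, conj_I, map_ofNat]; linear_combination -I_sq / 4
  refine ⟨hdisc.differentiableOn, hdisc.mapsTo, ?_, hdisc.hasDerivAt.congr_deriv ?_⟩
  · show symPi (mobius (I / 2) (e * 0)) (mobius (-(I / 2)) (conj e * 0)) = w₀
    rw [mul_zero, mul_zero, mobius_zero, mobius_zero]
    refine Prod.ext ?_ ?_ <;> simp only [symPi]
    · ring
    · linear_combination -I_sq / 4
  · simp only [Function.comp_apply, mul_zero, mobius_zero, map_neg, neg_mul_neg, hc]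
    ext <;> ring

lemma Phi_zero (ω : ℂ) : Phi ω 0 = 0 := by simp [Phi]

lemma norm_Phi_quarter {ω : ℂ} (hω : ‖ω‖ = 1) : ‖Phi ω w₀‖ = 1 / 4 := by
  rw [Phi, show (2 * ω * (1 / 4) - 0) / (2 - ω * 0) = ω / 4 by ring, norm_div, hω]
  norm_num

lemma phiDeriv_zero_apply (ω : ℂ) (v : ℂ × ℂ) : phiDeriv ω 0 v = ω * v.2 - v.1 / 2 := by
  rw [phiDeriv_apply, Prod.fst_zero, Prod.snd_zero]; ring

lemma phiDeriv_quarter_apply (ω : ℂ) (v : ℂ × ℂ) :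
    phiDeriv ω w₀ v = (ω ^ 2 - 4) / 8 * v.1 + ω * v.2 := by
  rw [phiDeriv_apply]; ring

lemma eq_zero_of_phiDeriv_quarter_eq_zero {ω₁ ω₂ : ℂ} (h₁ : ‖ω₁‖ = 1) (h₂ : ‖ω₂‖ = 1)
    (hne : ω₁ ≠ ω₂) {d : ℂ × ℂ} (hd₁ : phiDeriv ω₁ w₀ d = 0) (hd₂ : phiDeriv ω₂ w₀ d = 0) :
    d = 0 := by
  rw [phiDeriv_quarter_apply] at hd₁ hd₂
  have hdiff : (ω₁ - ω₂) * ((ω₁ + ω₂) / 8 * d.1 + d.2) = 0 := by linear_combination hd₁ - hd₂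
  have hd : d.2 = -(ω₁ + ω₂) / 8 * d.1 := by
    linear_combination (mul_eq_zero.1 hdiff).resolve_left (sub_ne_zero.2 hne)
  -- eliminating `d.2` leaves `(ω₁ ω₂ + 4) d.1 = 0`, and `|ω₁ ω₂| = 1`
  have hprod : (ω₁ * ω₂ + 4) * d.1 = 0 := by rw [hd] at hd₁; linear_combination -8 * hd₁
  have h4 : ω₁ * ω₂ + 4 ≠ 0 := fun h => by
    have := congrArg norm (eq_neg_of_add_eq_zero_left h)
    norm_num [norm_mul, h₁, h₂] at this
  have hd1 : d.1 = 0 := (mul_eq_zero.1 hprod).resolve_left h4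
  exact Prod.ext hd1 (by rw [hd, hd1, mul_zero]; rfl)

/-- The Carathéodory norm of `G₂` at the origin, `sup_{|ω| = 1} |Φ_ω'(0) v|`. -/
def originNorm (v : ℂ × ℂ) : ℝ := ‖v.1‖ / 2 + ‖v.2‖

lemma exists_norm_eq_one_norm_mul_add_eq (a b : ℂ) :
    ∃ ω : ℂ, ‖ω‖ = 1 ∧ ‖ω * a + b‖ = ‖a‖ + ‖b‖ := by
  refine ⟨exp ((arg b - arg a : ℝ) * I), norm_exp_ofReal_mul_I _, ?_⟩
  have hrot : exp ((arg b - arg a : ℝ) * I) * exp (arg a * I) = exp (arg b * I) := by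
    rw [← Complex.exp_add]; push_cast; ring_nf
  have : exp ((arg b - arg a : ℝ) * I) * a + b = (‖a‖ + ‖b‖ : ℝ) * exp (arg b * I) := by
    calc _ = exp ((arg b - arg a : ℝ) * I) * (‖a‖ * exp (arg a * I)) + ‖b‖ * exp (arg b * I) := by
          rw [norm_mul_exp_arg_mul_I, norm_mul_exp_arg_mul_I]
      _ = _ := by rw [mul_left_comm, hrot]; push_cast; ring
  rw [this, norm_mul, norm_exp_ofReal_mul_I, mul_one, Complex.norm_of_nonneg (by positivity)]

lemma originNorm_le_of_forall {v : ℂ × ℂ} {r : ℝ}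
    (h : ∀ ω : ℂ, ‖ω‖ = 1 → ‖ω * v.2 - v.1 / 2‖ ≤ r) : originNorm v ≤ r := by
  obtain ⟨ω, hω, heq⟩ := exists_norm_eq_one_norm_mul_add_eq v.2 (-(v.1 / 2))
  rw [← sub_eq_add_neg, norm_neg, norm_div, norm_ofNat] at heq
  have := heq ▸ h ω hω
  rw [originNorm]
  linarith

lemma map_eq_fst_smul_add_snd_smul {M F : Type*} [AddCommGroup M] [Module ℂ M]
    [FunLike F (ℂ × ℂ) M] [LinearMapClass F ℂ (ℂ × ℂ) M] (L : F) (x : ℂ × ℂ) :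
    L x = x.1 • L (1, 0) + x.2 • L (0, 1) := by
  rw [← map_smul, ← map_smul, ← map_add]
  congr 1
  ext <;> simp

lemma norm_le_mul_originNorm (ℓ : ℂ × ℂ →L[ℂ] ℂ) {c : ℝ} (h₁ : ‖ℓ (2, 0)‖ ≤ c)
    (h₂ : ‖ℓ (0, 1)‖ ≤ c) (x : ℂ × ℂ) : ‖ℓ x‖ ≤ c * originNorm x := by
  have h₁' : ‖ℓ (1, 0)‖ ≤ c / 2 := by
    rw [show ((2 : ℂ), (0 : ℂ)) = (2 : ℂ) • ((1 : ℂ), (0 : ℂ)) by simp, map_smul, norm_smul,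
      norm_ofNat] at h₁
    linarith
  calc ‖ℓ x‖ = ‖x.1 • ℓ (1, 0) + x.2 • ℓ (0, 1)‖ := by rw [map_eq_fst_smul_add_snd_smul ℓ]
    _ ≤ ‖x.1‖ * (c / 2) + ‖x.2‖ * c := by grw [norm_add_le, norm_smul, norm_smul, h₁', h₂]
    _ = c * originNorm x := by rw [originNorm]; ring

lemma exists_ne_zero_originNorm_add_le {v : ℂ × ℂ} (h₁ : v.1 ≠ 0) (h₂ : v.2 ≠ 0) :
    ∃ d ≠ 0, originNorm (v + d) ≤ originNorm v ∧ originNorm (v - d) ≤ originNorm v := by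
  have hr₁ : 0 < ‖v.1‖ := norm_pos_iff.2 h₁
  have hr₂ : 0 < ‖v.2‖ := norm_pos_iff.2 h₂
  -- moving `v.1` and `v.2` in opposite directions at rates `‖v.2‖` and `‖v.1‖ / 2`
  -- keeps `originNorm` constant
  set s := ‖v.2‖ / (‖v.1‖ + ‖v.2‖)
  set t := ‖v.1‖ / (2 * (‖v.1‖ + ‖v.2‖))
  have hs : s ≤ 1 := div_le_one_of_le₀ (by linarith) (by positivity)
  have ht : t ≤ 1 := div_le_one_of_le₀ (by linarith) (by positivity)
  have hst : s * ‖v.1‖ / 2 = t * ‖v.2‖ := by simp only [s, t]; field_simp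
  have hnorm (x : ℝ) (z : ℂ) (hx : 0 ≤ x) : ‖(x : ℂ) * z‖ = x * ‖z‖ := by
    rw [norm_mul, Complex.norm_of_nonneg hx]
  refine ⟨((s : ℂ) * v.1, -((t : ℂ) * v.2)), fun h => ?_, le_of_eq ?_, le_of_eq ?_⟩
  · have := congrArg Prod.fst h
    simp only [Prod.fst_zero, mul_eq_zero, ofReal_eq_zero] at this
    exact this.elim (by positivity) h₁
  · rw [originNorm, Prod.fst_add, Prod.snd_add,
      show v.1 + s * v.1 = ((1 + s : ℝ) : ℂ) * v.1 by push_cast; ring,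
      show v.2 + -(t * v.2) = ((1 - t : ℝ) : ℂ) * v.2 by push_cast; ring,
      hnorm _ _ (by positivity), hnorm _ _ (by linarith), originNorm]
    linarith
  · rw [originNorm, Prod.fst_sub, Prod.snd_sub,
      show v.1 - s * v.1 = ((1 - s : ℝ) : ℂ) * v.1 by push_cast; ring,
      show v.2 - -(t * v.2) = ((1 + t : ℝ) : ℂ) * v.2 by push_cast; ring,
      hnorm _ _ (by linarith), hnorm _ _ (by positivity), originNorm]
    linarith

lemma eq_zero_of_norm_add_le_of_norm_sub_le {E : Type*} [NormedAddCommGroup E] [NormedSpace ℝ E]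
    [StrictConvexSpace ℝ E] {p q : E} {c : ℝ} (hadd : ‖p + q‖ ≤ c) (hsub : ‖p - q‖ ≤ c)
    (hp : ‖p‖ = c) : q = 0 := by
  by_contra hq
  have hne : p + q ≠ p - q := fun h => hq <| by
    have h2 : (2 : ℝ) • q = 0 := by linear_combination (norm := module) h
    simpa using h2
  have := norm_combo_lt_of_ne hadd hsub hne (a := 1 / 2) (b := 1 / 2)
    (by norm_num) (by norm_num) (by norm_num)
  rw [← smul_add, add_add_sub_cancel, ← two_smul ℝ p, smul_smul] at this
  norm_num [hp] at this

theorem fst_eq_zero_or_snd_eq_zero_of_norm_eq {ι : Type*} {ℓ : ι → ℂ × ℂ →L[ℂ] ℂ}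
    (hℓ : ∀ d, (∀ i, ℓ i d = 0) → d = 0) {L : ℂ × ℂ →L[ℂ] ℂ × ℂ} (hL : Function.Injective L)
    {c : ℝ} (hbound : ∀ i x, ‖ℓ i (L x)‖ ≤ c * originNorm x) {v : ℂ × ℂ} (hv : originNorm v ≤ 1)
    (hpeak : ∀ i, ‖ℓ i (L v)‖ = c) : v.1 = 0 ∨ v.2 = 0 := by
  by_contra! h
  obtain ⟨d, hd, hadd, hsub⟩ := exists_ne_zero_originNorm_add_le h.1 h.2
  refine hd (hL ((hℓ _ fun i => ?_).trans (map_zero L).symm))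
  have hc : 0 ≤ c := hpeak i ▸ norm_nonneg _
  refine eq_zero_of_norm_add_le_of_norm_sub_le ?_ ?_ (hpeak i)
  · rw [← map_add, ← map_add]
    exact (hbound i _).trans (mul_le_of_le_one_right hc (hadd.trans hv))
  · rw [← map_sub, ← map_sub]
    exact (hbound i _).trans (mul_le_of_le_one_right hc (hsub.trans hv))

def cross (x y : ℂ × ℂ) : ℂ := x.1 * y.2 - x.2 * y.1

lemma cross_map_eq_zero (L : ℂ × ℂ →L[ℂ] ℂ × ℂ) {x y : ℂ × ℂ} (h : cross x y = 0) :
    cross (L x) (L y) = 0 := by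
  have hdet : cross (L x) (L y) = cross (L (1, 0)) (L (0, 1)) * cross x y := by
    rw [map_eq_fst_smul_add_snd_smul L x, map_eq_fst_smul_add_snd_smul L y]
    simp only [cross, Prod.fst_add, Prod.snd_add, Prod.smul_fst, Prod.smul_snd, smul_eq_mul]
    ring
  rw [hdet, h, mul_zero]

lemma cross_eq_zero_of_fst_eq_zero_or_snd_eq_zero {a b c : ℂ × ℂ} (ha : a.1 = 0 ∨ a.2 = 0)
    (hb : b.1 = 0 ∨ b.2 = 0) (hc : c.1 = 0 ∨ c.2 = 0) :
    cross a b = 0 ∨ cross a c = 0 ∨ cross b c = 0 := by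
  rcases ha with ha | ha <;> rcases hb with hb | hb <;> rcases hc with hc | hc <;>
    simp [cross, ha, hb, hc]

/-- `15 / 16 = 1 - ‖Φ_ω w₀‖ ^ 2` is the Schwarz–Pick bound for `Φ_ω` along discs through `w₀`. -/
def IsExtremalAtQuarter (u : ℂ × ℂ) : Prop :=
  (∃ ψ, IsAnalyticDisc ψ w₀ u) ∧ ∃ ω₁ ω₂ : ℂ, ω₁ ≠ ω₂ ∧ ‖ω₁‖ = 1 ∧ ‖ω₂‖ = 1 ∧
    ‖phiDeriv ω₁ w₀ u‖ = 15 / 16 ∧ ‖phiDeriv ω₂ w₀ u‖ = 15 / 16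

lemma isExtremalAtQuarter_fst_axis : IsExtremalAtQuarter (3 / 2, 0) := by
  have hdisc := isAnalyticDisc_quarter (e := 1) (by simp)
  rw [map_one, show (3 / 4 * (1 + 1 : ℂ), 3 / 8 * I * (1 - 1)) = (3 / 2, 0) by norm_num] at hdisc
  have hpeak (ω : ℂ) (hω : ω ^ 2 = -1) : ‖phiDeriv ω w₀ (3 / 2, 0)‖ = 15 / 16 := by
    rw [phiDeriv_quarter_apply, hω]; norm_num
  exact ⟨⟨_, hdisc⟩, I, -I, fun h => I_ne_zero (by linear_combination h / 2), by simp, by simp,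
    hpeak _ I_sq, hpeak _ (by rw [neg_sq, I_sq])⟩

lemma isExtremalAtQuarter_snd_axis : IsExtremalAtQuarter (0, 15 / 16) := by
  have hpeak (ω : ℂ) (hω : ‖ω‖ = 1) : ‖phiDeriv ω w₀ (0, 15 / 16)‖ = 15 / 16 := by
    rw [phiDeriv_quarter_apply, mul_zero, zero_add, norm_mul, hω]; norm_num
  exact ⟨⟨_, isAnalyticDisc_zero_prod_mobius⟩, 1, -1, by norm_num, by simp, by simp,
    hpeak _ (by simp), hpeak _ (by simp)⟩

lemma norm_eq_of_normSq_eq {z : ℂ} {r : ℝ} (hr : 0 ≤ r) (h : normSq z = r ^ 2) : ‖z‖ = r := by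
  rw [← sq_eq_sq₀ (norm_nonneg _) hr, Complex.sq_norm, h]

lemma norm_phiDeriv_quarter_of_sq_eq {y : ℝ} (hy : y ^ 2 = 175 / 256) :
    ‖((-9 / 16 : ℝ) + y * I : ℂ)‖ = 1 ∧
      ‖phiDeriv ((-9 / 16 : ℝ) + y * I) w₀ (6 / 5, 9 / 20)‖ = 15 / 16 := by
  refine ⟨norm_eq_of_normSq_eq zero_le_one ?_, norm_eq_of_normSq_eq (by norm_num) ?_⟩
  · rw [normSq_add_mul_I]; linear_combination hy
  · have hy' := congrArg ((↑) : ℝ → ℂ) hy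
    push_cast at hy'
    rw [show phiDeriv ((-9 / 16 : ℝ) + y * I) w₀ (6 / 5, 9 / 20) =
        (-465 / 512 : ℝ) + (9 / 32 * y : ℝ) * I by
      rw [phiDeriv_quarter_apply]; push_cast
      linear_combination (3 / 20 * (y : ℂ) ^ 2) * I_sq - 3 / 20 * hy',
      normSq_add_mul_I]
    linear_combination (81 / 1024) * hy

lemma isExtremalAtQuarter_oblique : IsExtremalAtQuarter (6 / 5, 9 / 20) := by
  set e : ℂ := (4 / 5 : ℝ) + (3 / 5 : ℝ) * I
  have he : ‖e‖ = 1 := norm_eq_of_normSq_eq zero_le_one (by rw [normSq_add_mul_I]; norm_num)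
  have hdisc := isAnalyticDisc_quarter he
  have hconj : conj e = (4 / 5 : ℝ) - (3 / 5 : ℝ) * I := by
    simp only [e, map_add, map_mul, conj_ofReal, conj_I]; ring
  rw [hconj, show (3 / 4 * (e + ((4 / 5 : ℝ) - (3 / 5 : ℝ) * I)),
      3 / 8 * I * (((4 / 5 : ℝ) - (3 / 5 : ℝ) * I) - e)) = ((6 / 5 : ℂ), (9 / 20 : ℂ)) by
    refine Prod.ext ?_ ?_ <;> simp only [e] <;> push_cast
    · ring
    · linear_combination (-9 / 20) * I_sq] at hdisc
  have hy : √(175 / 256) ^ 2 = 175 / 256 := Real.sq_sqrt (by norm_num)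
  obtain ⟨h₁, hp₁⟩ := norm_phiDeriv_quarter_of_sq_eq hy
  obtain ⟨h₂, hp₂⟩ := norm_phiDeriv_quarter_of_sq_eq (y := -√(175 / 256)) (by rwa [neg_sq])
  refine ⟨⟨_, hdisc⟩, _, _, fun h => ?_, h₁, h₂, hp₁, hp₂⟩
  have := congrArg im h
  simp only [add_im, ofReal_im, mul_im, ofReal_re, I_re, I_im] at this
  have : 0 < √(175 / 256) := by positivity
  linarith

lemma norm_phiDeriv_fderiv_le {F : ℂ × ℂ → ℂ × ℂ} {L : ℂ × ℂ →L[ℂ] ℂ × ℂ} {ω : ℂ}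
    (hF : DifferentiableOn ℂ F G2) (hFG : MapsTo F G2 G2) (hL : HasFDerivAt F L 0)
    (hω : ‖ω‖ = 1) (x : ℂ × ℂ) :
    ‖phiDeriv ω (F 0) (L x)‖ ≤ (1 - ‖Phi ω (F 0)‖ ^ 2) * originNorm x :=
  norm_le_mul_originNorm ((phiDeriv ω (F 0)).comp L)
    (norm_phiDeriv_le hF hFG hL isAnalyticDisc_royal hω)
    (norm_phiDeriv_le hF hFG hL isAnalyticDisc_zero_prod_id hω) x

lemma originNorm_fderiv_le_one {G : ℂ × ℂ → ℂ × ℂ} {M : ℂ × ℂ →L[ℂ] ℂ × ℂ} {ψ : ℂ → ℂ × ℂ}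
    {z v : ℂ × ℂ} (hG : DifferentiableOn ℂ G G2) (hGG : MapsTo G G2 G2) (hGz : G z = 0)
    (hM : HasFDerivAt G M z) (hψ : IsAnalyticDisc ψ z v) : originNorm (M v) ≤ 1 :=
  originNorm_le_of_forall fun ω hω => by
    simpa [hGz, Phi_zero, phiDeriv_zero_apply] using norm_phiDeriv_le hG hGG hM hψ hω

lemma comp_eq_id_of_leftInvOn {𝕜 E F : Type*} [NontriviallyNormedField 𝕜] [NormedAddCommGroup E]
    [NormedSpace 𝕜 E] [NormedAddCommGroup F] [NormedSpace 𝕜 F] {f : E → F} {g : F → E} {s : Set E}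
    {x : E} {f' : E →L[𝕜] F} {g' : F →L[𝕜] E} (hs : s ∈ 𝓝 x) (hgf : LeftInvOn g f s)
    (hf : HasFDerivAt f f' x) (hg : HasFDerivAt g g' (f x)) :
    g'.comp f' = ContinuousLinearMap.id 𝕜 E :=
  (hg.comp x hf).unique ((hasFDerivAt_id x).congr_of_eventuallyEq (Filter.eventually_of_mem hs hgf))

theorem exists_mem_axes_fderiv_eq {F : ℂ × ℂ → ℂ × ℂ} (hF : IsAutomorphismOf G2 F)
    (hFz : F 0 = w₀) {u : ℂ × ℂ} (hu : IsExtremalAtQuarter u) :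
    ∃ x : ℂ × ℂ, (x.1 = 0 ∨ x.2 = 0) ∧ fderiv ℂ F 0 x = u := by
  obtain ⟨hFd, hFG, G, hGd, hGG, hGF, hFG'⟩ := hF
  obtain ⟨⟨ψ, hψ⟩, ω₁, ω₂, hne, hω₁, hω₂, hp₁, hp₂⟩ := hu
  have hz : G2 ∈ 𝓝 (0 : ℂ × ℂ) := G2_mem_nhds (by simp)
  have hw : G2 ∈ 𝓝 w₀ := G2_mem_nhds (by norm_num)
  obtain ⟨L, hL⟩ : ∃ L, HasFDerivAt F L 0 := ⟨_, (hFd.differentiableAt hz).hasFDerivAt⟩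
  obtain ⟨M, hM⟩ : ∃ M, HasFDerivAt G M w₀ := ⟨_, (hGd.differentiableAt hw).hasFDerivAt⟩
  have hGw : G w₀ = 0 := hFz ▸ hGF (mem_of_mem_nhds hz)
  have hML := comp_eq_id_of_leftInvOn hz hGF hL (by rwa [hFz])
  have hLM := comp_eq_id_of_leftInvOn hw hFG' hM (by rwa [hGw])
  have hLMu : L (M u) = u := DFunLike.congr_fun hLM u
  rw [hL.fderiv]
  refine ⟨M u, fst_eq_zero_or_snd_eq_zero_of_norm_eq (ℓ := fun i => phiDeriv (![ω₁, ω₂] i) w₀)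
    (fun d hd => eq_zero_of_phiDeriv_quarter_eq_zero hω₁ hω₂ hne (hd 0) (hd 1))
    (Function.LeftInverse.injective (DFunLike.congr_fun hML)) (c := 15 / 16) (fun i x => ?_)
    (originNorm_fderiv_le_one hGd hGG hGw hM hψ) (fun i => ?_), hLMu⟩
  · have hi : ‖![ω₁, ω₂] i‖ = 1 := by fin_cases i <;> assumption
    have := norm_phiDeriv_fderiv_le hFd hFG hL hi x
    rwa [hFz, norm_Phi_quarter hi, show (1 - (1 / 4) ^ 2 : ℝ) = 15 / 16 by norm_num] at this
  · rw [hLMu]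
    fin_cases i
    exacts [hp₁, hp₂]

end SymmetrizedBidisc

open SymmetrizedBidisc

/-- `Aut(G₂)` does not act transitively on `G₂`; the symmetrized bidisc
is inhomogeneous. -/
theorem aut_G2_not_transitive :
    ∃ z ∈ G2, ∃ w ∈ G2,
      ∀ F : ℂ × ℂ → ℂ × ℂ, IsAutomorphismOf G2 F → F z ≠ w := by
  refine ⟨0, mem_of_mem_nhds (G2_mem_nhds (by simp)), ((0 : ℂ), (1 / 4 : ℂ)),
    mem_of_mem_nhds (G2_mem_nhds (by norm_num)), fun F hF hFz => ?_⟩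
  obtain ⟨x₁, hx₁, h₁⟩ := exists_mem_axes_fderiv_eq hF hFz isExtremalAtQuarter_fst_axis
  obtain ⟨x₂, hx₂, h₂⟩ := exists_mem_axes_fderiv_eq hF hFz isExtremalAtQuarter_snd_axis
  obtain ⟨x₃, hx₃, h₃⟩ := exists_mem_axes_fderiv_eq hF hFz isExtremalAtQuarter_oblique
  rcases cross_eq_zero_of_fst_eq_zero_or_snd_eq_zero hx₁ hx₂ hx₃ with h | h | h <;>
  · have := cross_map_eq_zero (fderiv ℂ F 0) h
    simp only [h₁, h₂, h₃, cross] at this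
    norm_num at this
end
end

section
/- If F is a holomorphic automorphism of G₂ fixing Σ₂ pointwise (i.e. F(2λ, λ²) = (2λ, λ²) for all λ ∈ E), then its derivative at the origin is diagonal: F'(0,0) = [[1, 0], [0, d]] for some d ∈ ℂ. -/
/-! Let `L = F'(0)` and let `σ(s, p) = (-s, p)`, an automorphism of `G₂`. Differentiating
`F` along `Σ₂` gives `L (1, 0) = (1, 0)`. Then the self-map `σ ∘ F ∘ σ ∘ F⁻¹` of `G₂` fixes `0`
with unipotent derivative `N = σ L σ L⁻¹` there: `N (0, 1) = (0, 1) + 2a (1, 0)`, where `a` is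
the first coordinate of `L⁻¹ (0, 1)`. As `G₂` is bounded and contains a ball around `0`, the
Schwarz lemma bounds the derivatives `Nⁿ` of its iterates uniformly, which forces `a = 0`,
that is, `L (0, 1) ∈ ℂ (0, 1)`. -/

open Set

noncomputable section

section Calculus

variable {𝕜 : Type*} [NontriviallyNormedField 𝕜] {E F : Type*} [NormedAddCommGroup E]
  [NormedSpace 𝕜 E] [NormedAddCommGroup F] [NormedSpace 𝕜 F]

theorem HasFDerivAt.comp_eq_id_of_eventually_leftInverse {f : E → F} {g : F → E}
    {f' : E →L[𝕜] F} {g' : F →L[𝕜] E} {x : E} (hf : HasFDerivAt f f' x)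
    (hg : HasFDerivAt g g' (f x)) (hgf : ∀ᶠ y in nhds x, g (f y) = y) :
    g'.comp f' = ContinuousLinearMap.id 𝕜 E :=
  (hg.comp x hf).unique ((hasFDerivAt_id x).congr_of_eventuallyEq hgf)

theorem HasFDerivAt.apply_eq_of_eventually_comp_eq {f : E → E} {f' : E →L[𝕜] E} {γ : 𝕜 → E}
    {v : E} {t : 𝕜} (hf : HasFDerivAt f f' (γ t)) (hγ : HasDerivAt γ v t)
    (hfix : ∀ᶠ s in nhds t, f (γ s) = γ s) : f' v = v :=
  ((hf.comp_hasDerivAt t hγ).congr_of_eventuallyEq (Filter.EventuallyEq.symm hfix)).unique hγ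

end Calculus

theorem ContinuousLinearMap.eq_zero_of_norm_pow_le {𝕜 E : Type*} [RCLike 𝕜]
    [NormedAddCommGroup E] [NormedSpace 𝕜 E] {N : E →L[𝕜] E} {v w : E} (hw : N w = w)
    (hv : N v = v + w) {C : ℝ} (hC : ∀ n : ℕ, ‖N ^ n‖ ≤ C) : w = 0 := by
  have horbit : ∀ n : ℕ, (N ^ n) v = v + (n : 𝕜) • w := by
    intro n
    induction n with
    | zero => simp
    | succ n ih =>
      rw [pow_succ', mul_apply_eq_comp, ih, map_add, map_smul, hv, hw]
      push_cast
      module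
  by_contra hne
  obtain ⟨n, hn⟩ := exists_nat_gt ((C * ‖v‖ + ‖v‖) / ‖w‖)
  have hgrowth : n * ‖w‖ ≤ C * ‖v‖ + ‖v‖ := calc
    n * ‖w‖ = ‖(N ^ n) v - v‖ := by rw [horbit, add_sub_cancel_left, norm_smul, RCLike.norm_natCast]
    _ ≤ ‖(N ^ n) v‖ + ‖v‖ := norm_sub_le _ _
    _ ≤ C * ‖v‖ + ‖v‖ := by gcongr; exact (N ^ n).le_of_opNorm_le (hC n) v
  rw [div_lt_iff₀ (norm_pos_iff.2 hne)] at hn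
  linarith

theorem norm_pow_le_of_hasFDerivAt_of_mapsTo {E : Type*} [NormedAddCommGroup E]
    [NormedSpace ℂ E] {D : Set E} {f : E → E} {f' : E →L[ℂ] E} {c : E} {r R : ℝ} (hr : 0 < r)
    (hball : Metric.ball c r ⊆ D) (hD : D ⊆ Metric.closedBall c R)
    (hf : DifferentiableOn ℂ f D) (hmaps : MapsTo f D D) (hc : f c = c)
    (hf' : HasFDerivAt f f' c) (n : ℕ) : ‖f' ^ n‖ ≤ R / r := by
  rw [← (hf'.iterate hc n).fderiv]
  refine Complex.norm_fderiv_le_div_of_mapsTo_ball ((hf.iterate hmaps n).mono hball) ?_ hr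
  rw [Function.iterate_fixed hc]
  exact fun x hx ↦ hD (hmaps.iterate n (hball hx))

namespace G2

lemma unitDisc_eq_ball : unitDisc = Metric.ball 0 1 := by
  ext z
  simp [unitDisc]

lemma ball_subset : Metric.ball (0 : ℂ × ℂ) (1 / 2) ⊆ G2 := by
  rintro ⟨s, p⟩ hsp
  rw [mem_ball_zero_iff, Prod.norm_def, max_lt_iff] at hsp
  obtain ⟨hs, hp⟩ := hsp
  obtain ⟨w, hw⟩ : ∃ w : ℂ, w ^ 2 = s ^ 2 - 4 * p := IsAlgClosed.exists_pow_nat_eq _ two_pos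
  have hw_lt : ‖w‖ < 3 / 2 := by
    have hdisc : ‖w‖ ^ 2 ≤ ‖s‖ ^ 2 + 4 * ‖p‖ := by
      rw [← norm_pow, hw]
      calc ‖s ^ 2 - 4 * p‖ ≤ ‖s ^ 2‖ + ‖4 * p‖ := norm_sub_le _ _
        _ = ‖s‖ ^ 2 + 4 * ‖p‖ := by rw [norm_pow, norm_mul]; norm_num
    nlinarith [norm_nonneg w, norm_nonneg s]
  refine ⟨(s + w) / 2, ?_, (s - w) / 2, ?_, ?_⟩
  · simp only [unitDisc, mem_ofPred_eq, norm_div, Complex.norm_two]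
    linarith [norm_add_le s w]
  · simp only [unitDisc, mem_ofPred_eq, norm_div, Complex.norm_two]
    linarith [norm_sub_le s w]
  · simp only [symPi, Prod.mk.injEq]
    constructor
    · ring
    · linear_combination -hw / 4

lemma subset_closedBall : G2 ⊆ Metric.closedBall (0 : ℂ × ℂ) 2 := by
  rintro _ ⟨l₁, h₁, l₂, h₂, rfl⟩
  simp only [unitDisc, mem_ofPred_eq] at h₁ h₂
  rw [mem_closedBall_zero_iff, symPi, Prod.norm_def, max_le_iff, norm_mul]
  constructor
  · linarith [norm_add_le l₁ l₂]
  · nlinarith [norm_nonneg l₁, norm_nonneg l₂]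

lemma mem_nhds_zero : G2 ∈ nhds (0 : ℂ × ℂ) :=
  Filter.mem_of_superset (Metric.ball_mem_nhds _ one_half_pos) ball_subset

/-- Induced by `(λ₁, λ₂) ↦ (-λ₁, -λ₂)` on `E × E`. -/
def negFst : ℂ × ℂ →L[ℂ] ℂ × ℂ :=
  (-ContinuousLinearMap.id ℂ ℂ).prodMap (ContinuousLinearMap.id ℂ ℂ)

@[simp]
lemma negFst_apply (w : ℂ × ℂ) : negFst w = (-w.1, w.2) := rfl

lemma negFst_mapsTo : MapsTo negFst G2 G2 := by
  rintro _ ⟨l₁, h₁, l₂, h₂, rfl⟩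
  refine ⟨-l₁, by simpa [unitDisc] using h₁, -l₂, by simpa [unitDisc] using h₂, ?_⟩
  simp only [symPi, negFst_apply, Prod.mk.injEq]
  constructor <;> ring

lemma exists_apply_zero_one_eq {L M : ℂ × ℂ →L[ℂ] ℂ × ℂ}
    (hML : M.comp L = ContinuousLinearMap.id ℂ _) (hLM : L.comp M = ContinuousLinearMap.id ℂ _)
    (hL : L (1, 0) = (1, 0)) {C : ℝ}
    (hC : ∀ n : ℕ, ‖(negFst.comp (L.comp (negFst.comp M))) ^ n‖ ≤ C) :
    ∃ d : ℂ, L (0, 1) = (0, d) := by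
  set m := M (0, 1)
  have hM : M (1, 0) = (1, 0) := by simpa [hL] using congr($hML (1, 0))
  have hLm : L m = (0, 1) := congr($hLM (0, 1))
  have hreflect : negFst m = m - (2 * m.1) • (1, 0) := by
    ext <;> simp; ring
  set N := negFst.comp (L.comp (negFst.comp M))
  have hN₁ : N (1, 0) = (1, 0) := by
    have hneg : negFst (1, 0) = -(1, 0) := by simp
    simp only [N, ContinuousLinearMap.comp_apply]
    rw [hM, hneg, map_neg, hL, map_neg, hneg, neg_neg]
  have hN₂ : N (0, 1) = (0, 1) + (2 * m.1) • (1, 0) := by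
    simp only [N, ContinuousLinearMap.comp_apply]
    rw [hreflect, map_sub, map_smul, hL, hLm]
    ext <;> simp
  have hw : (2 * m.1) • ((1, 0) : ℂ × ℂ) = 0 :=
    ContinuousLinearMap.eq_zero_of_norm_pow_le (by rw [map_smul, hN₁]) hN₂ hC
  have hm₁ : m.1 = 0 := by simpa using hw
  have hm : m = m.2 • (0, 1) := by ext <;> simp [hm₁]
  have hm₂ : m.2 ≠ 0 := by
    rintro h
    simpa [h, Prod.ext_iff] using congr(L $hm).symm.trans hLm
  refine ⟨m.2⁻¹, ?_⟩
  have := congr(m.2⁻¹ • L $hm)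
  rw [map_smul, smul_smul, inv_mul_cancel₀ hm₂, one_smul, hLm] at this
  rw [← this]
  ext <;> simp

lemma norm_pow_fderiv_negFst_conj_le {F G : ℂ × ℂ → ℂ × ℂ} {L M : ℂ × ℂ →L[ℂ] ℂ × ℂ}
    (hFd : DifferentiableOn ℂ F G2) (hFmaps : MapsTo F G2 G2) (hF₀ : F 0 = 0)
    (hL : HasFDerivAt F L 0) (hGd : DifferentiableOn ℂ G G2) (hGmaps : MapsTo G G2 G2)
    (hG₀ : G 0 = 0) (hM : HasFDerivAt G M 0) (n : ℕ) :
    ‖(negFst.comp (L.comp (negFst.comp M))) ^ n‖ ≤ 2 / (1 / 2) := by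
  set Ψ := negFst ∘ F ∘ negFst ∘ G
  have hΨ : HasFDerivAt Ψ (negFst.comp (L.comp (negFst.comp M))) 0 := by
    refine negFst.hasFDerivAt.comp 0 (HasFDerivAt.comp 0 ?_ (negFst.hasFDerivAt.comp 0 hM))
    rwa [Function.comp_apply, hG₀, map_zero]
  have hΨd : DifferentiableOn ℂ Ψ G2 :=
    negFst.differentiable.comp_differentiableOn
      (hFd.comp (negFst.differentiable.comp_differentiableOn hGd) (negFst_mapsTo.comp hGmaps))
  have hΨmaps : MapsTo Ψ G2 G2 := negFst_mapsTo.comp (hFmaps.comp (negFst_mapsTo.comp hGmaps))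
  have hΨ₀ : Ψ 0 = 0 := by simp only [Ψ, Function.comp_apply, hG₀, map_zero, hF₀]
  exact norm_pow_le_of_hasFDerivAt_of_mapsTo one_half_pos ball_subset subset_closedBall hΨd
    hΨmaps hΨ₀ hΨ n

lemma hasDerivAt_sigma2 : HasDerivAt (fun l : ℂ ↦ (2 * l, l ^ 2)) ((2, 0) : ℂ × ℂ) 0 := by
  simpa using ((hasDerivAt_id (0 : ℂ)).const_mul 2).prodMk (hasDerivAt_pow 2 (0 : ℂ))

lemma apply_one_zero_of_fixes_sigma2 {F : ℂ × ℂ → ℂ × ℂ} {L : ℂ × ℂ →L[ℂ] ℂ × ℂ}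
    (hF : HasFDerivAt F L 0) (hfix : ∀ l ∈ unitDisc, F (2 * l, l ^ 2) = (2 * l, l ^ 2)) :
    L (1, 0) = (1, 0) := by
  have hnhds : unitDisc ∈ nhds (0 : ℂ) := unitDisc_eq_ball ▸ Metric.ball_mem_nhds 0 one_pos
  have hγ₀ : ((2 * 0, 0 ^ 2) : ℂ × ℂ) = 0 := by ext <;> simp
  have h₂ : L (2, 0) = (2, 0) :=
    HasFDerivAt.apply_eq_of_eventually_comp_eq (hγ₀ ▸ hF) hasDerivAt_sigma2
      (Filter.mem_of_superset hnhds hfix)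
  have : ((1, 0) : ℂ × ℂ) = (2 : ℂ)⁻¹ • (2, 0) := by ext <;> simp
  rw [this, map_smul, h₂]

end G2

open G2

/-- if an automorphism of `G₂` fixes `Σ₂` pointwise then its derivative
at the origin is the diagonal matrix `[[1, 0], [0, d]]`. -/
theorem derivative_at_origin_diagonal
    (F : ℂ × ℂ → ℂ × ℂ) (hF : IsAutomorphismOf G2 F)
    (hfix : ∀ l ∈ unitDisc, F (2 * l, l ^ 2) = (2 * l, l ^ 2)) :
    ∃ d : ℂ,
      fderiv ℂ F (0, 0) (1, 0) = (1, 0) ∧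
      fderiv ℂ F (0, 0) (0, 1) = (0, d) := by
  obtain ⟨hFd, hFmaps, G, hGd, hGmaps, hGF, hFG⟩ := hF
  have hF₀ : F 0 = 0 := by
    simpa only [mul_zero, zero_pow two_ne_zero, Prod.mk_zero_zero] using hfix 0 (by simp [unitDisc])
  have hG₀ : G 0 = 0 := by simpa [hF₀] using hGF (mem_of_mem_nhds mem_nhds_zero)
  rw [Prod.mk_zero_zero]
  set L := fderiv ℂ F 0
  set M := fderiv ℂ G 0
  have hL : HasFDerivAt F L 0 := (hFd.differentiableAt mem_nhds_zero).hasFDerivAt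
  have hM : HasFDerivAt G M 0 := (hGd.differentiableAt mem_nhds_zero).hasFDerivAt
  have hML : M.comp L = ContinuousLinearMap.id ℂ _ :=
    hL.comp_eq_id_of_eventually_leftInverse (by rwa [hF₀])
      (Filter.mem_of_superset mem_nhds_zero hGF)
  have hLM : L.comp M = ContinuousLinearMap.id ℂ _ :=
    hM.comp_eq_id_of_eventually_leftInverse (by rwa [hG₀])
      (Filter.mem_of_superset mem_nhds_zero hFG)
  have hL₁ : L (1, 0) = (1, 0) := apply_one_zero_of_fixes_sigma2 hL hfix
  obtain ⟨d, hd⟩ := exists_apply_zero_one_eq hML hLM hL₁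
    (norm_pow_fderiv_negFst_conj_le hFd hFmaps hF₀ hL hGd hGmaps hG₀ hM)
  exact ⟨d, hL₁, hd⟩
end
end

section
/- Let F = (S, P) : G₂ → ℂ² be a holomorphic map satisfying the equivariance relations S(τs, τ²p) = τ·S(s,p) and P(τs, τ²p) = τ²·P(s,p) for all (s,p) ∈ G₂ and all τ ∈ ℂ with |τ| = 1. Then there exist constants a, b, C ∈ ℂ such that S(s,p) = a·s and P(s,p) = b·p + C·s² for all (s,p) ∈ G₂. -/
open Set

noncomputable section

/-!
The circle action `(s, p) ↦ (τ s, τ² p)` extends to the closed disc: on each orbit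
`σ ↦ (σ s, σ² p)` the holomorphic functions `σ ↦ S (σ s, σ² p)` and `σ ↦ σ S (s, p)` agree on
the unit circle, hence on the disc by the maximum principle. So `S` and `P` are weighted
homogeneous of degrees 1 and 2 for the weights `(1, 2)`, which pins them down on the axes:
`S (s, 0) = a s`, `S (0, p) = 0`, `P (s, 0) = C s²`, `P (0, p) = b p`. The remainders
`S - a s` and `P - b p - C s²` vanish on both axes, so the Schwarz lemma in each variable bounds
them by `K |s| |p|` near the origin. This bound has weight 3, so scaling a remainder `f` of
degree `d ≤ 2` by a small real `t` gives `|f (s, p)| ≤ t ^ (3 - d) K |s| |p|`, forcing `f = 0`.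
-/

open Metric Filter Topology

def weightedSMul (τ : ℂ) (z : ℂ × ℂ) : ℂ × ℂ := (τ * z.1, τ ^ 2 * z.2)

@[simp] lemma weightedSMul_fst (τ : ℂ) (z : ℂ × ℂ) : (weightedSMul τ z).1 = τ * z.1 := rfl

@[simp] lemma weightedSMul_snd (τ : ℂ) (z : ℂ × ℂ) : (weightedSMul τ z).2 = τ ^ 2 * z.2 :=
  rfl

lemma differentiable_weightedSMul (z : ℂ × ℂ) :
    Differentiable ℂ fun τ : ℂ ↦ weightedSMul τ z := by
  unfold weightedSMul
  fun_prop

def IsWeightedHomogeneousOn (f : ℂ × ℂ → ℂ) (d : ℕ) (D : Set (ℂ × ℂ)) : Prop :=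
  ∀ z ∈ D, ∀ τ : ℂ, ‖τ‖ ≤ 1 → f (weightedSMul τ z) = τ ^ d * f z

lemma mk_mem_ball_zero_iff {s p : ℂ} {r : ℝ} :
    (s, p) ∈ ball (0 : ℂ × ℂ) r ↔ s ∈ ball 0 r ∧ p ∈ ball 0 r := by
  rw [← Prod.mk_zero_zero, ← ball_prod_same]
  rfl

/-- The witnesses are the roots of `λ² - s λ + p`. -/
lemma mem_G2_of_norm_lt {s p : ℂ} (hs : ‖s‖ < 4⁻¹) (hp : ‖p‖ < 4⁻¹) : (s, p) ∈ G2 := by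
  obtain ⟨w, hw⟩ := IsAlgClosed.exists_pow_nat_eq (s ^ 2 - 4 * p) two_pos
  have root_mem : ∀ l : ℂ, l ^ 2 = s * l - p → ‖l‖ < 1 := by
    intro l hl
    by_contra! h
    have : ‖l‖ ^ 2 ≤ ‖s‖ * ‖l‖ + ‖p‖ := by
      rw [← norm_pow, hl, ← norm_mul]
      exact norm_sub_le _ _
    nlinarith
  refine ⟨(s + w) / 2, root_mem _ (by linear_combination hw / 4),
    (s - w) / 2, root_mem _ (by linear_combination hw / 4), ?_⟩
  simp only [symPi, Prod.mk.injEq]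
  exact ⟨by ring, by linear_combination -hw / 4⟩

lemma closedBall_subset_G2 : closedBall (0 : ℂ × ℂ) 8⁻¹ ⊆ G2 := by
  intro z hz
  rw [mem_closedBall_zero_iff, Prod.norm_def, max_le_iff] at hz
  exact mem_G2_of_norm_lt (hz.1.trans_lt (by norm_num)) (hz.2.trans_lt (by norm_num))

lemma weightedSMul_mem_G2 {z : ℂ × ℂ} (hz : z ∈ G2) {τ : ℂ} (hτ : ‖τ‖ ≤ 1) :
    weightedSMul τ z ∈ G2 := by
  obtain ⟨l₁, hl₁, l₂, hl₂, rfl⟩ := hz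
  have scale_mem : ∀ l ∈ unitDisc, τ * l ∈ unitDisc := fun l (hl : ‖l‖ < 1) ↦
    show ‖τ * l‖ < 1 from
      (norm_mul τ l).trans_lt <| (mul_le_of_le_one_left (norm_nonneg l) hτ).trans_lt hl
  refine ⟨τ * l₁, scale_mem l₁ hl₁, τ * l₂, scale_mem l₂ hl₂, ?_⟩
  simp only [symPi, weightedSMul, Prod.mk.injEq]
  constructor <;> ring

lemma isWeightedHomogeneousOn_of_norm_eq_one {f : ℂ × ℂ → ℂ} {d : ℕ} {D : Set (ℂ × ℂ)}
    (hD : ∀ z ∈ D, ∀ τ : ℂ, ‖τ‖ ≤ 1 → weightedSMul τ z ∈ D) (hf : DifferentiableOn ℂ f D)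
    (hcirc : ∀ z ∈ D, ∀ τ : ℂ, ‖τ‖ = 1 → f (weightedSMul τ z) = τ ^ d * f z) :
    IsWeightedHomogeneousOn f d D := by
  intro z hz τ hτ
  have horbit : DiffContOnCl ℂ (fun σ ↦ f (weightedSMul σ z)) (ball 0 1) := by
    refine DifferentiableOn.diffContOnCl ?_
    rw [closure_ball _ one_ne_zero]
    exact hf.comp (differentiable_weightedSMul z).differentiableOn
      fun σ hσ ↦ hD z hz σ (mem_closedBall_zero_iff.1 hσ)
  have hmonomial : DiffContOnCl ℂ (fun σ : ℂ ↦ σ ^ d * f z) (ball 0 1) :=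
    Differentiable.diffContOnCl (by fun_prop)
  have heq := Complex.eqOn_closure_of_eqOn_frontier isBounded_ball horbit hmonomial <| by
    rw [frontier_ball _ one_ne_zero]
    exact fun σ hσ ↦ hcirc z hz σ (mem_sphere_zero_iff_norm.1 hσ)
  rw [closure_ball _ one_ne_zero] at heq
  exact heq (mem_closedBall_zero_iff.2 hτ)

lemma norm_le_div_mul_norm_of_apply_zero {g : ℂ → ℂ} {r M : ℝ}
    (hg : DifferentiableOn ℂ g (ball 0 r)) (h0 : g 0 = 0) (hM : ∀ w ∈ ball 0 r, ‖g w‖ ≤ M)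
    {w : ℂ} (hw : w ∈ ball 0 r) : ‖g w‖ ≤ M / r * ‖w‖ := by
  have hmaps : MapsTo g (ball 0 r) (closedBall (g 0) M) := fun v hv ↦ by
    simpa [h0] using hM v hv
  simpa [h0] using Complex.dist_le_div_mul_dist_of_mapsTo_ball hg hmaps hw

lemma norm_le_mul_norm_mul_norm_of_eq_zero_on_axes {f : ℂ × ℂ → ℂ} {r M : ℝ}
    (hf : DifferentiableOn ℂ f (ball 0 r)) (hM : ∀ z ∈ ball 0 r, ‖f z‖ ≤ M)
    (hs : ∀ s ∈ ball (0 : ℂ) r, f (s, 0) = 0) (hp : ∀ p ∈ ball (0 : ℂ) r, f (0, p) = 0)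
    {z : ℂ × ℂ} (hz : z ∈ ball 0 r) : ‖f z‖ ≤ M / r / r * (‖z.1‖ * ‖z.2‖) := by
  have hmem : ∀ s ∈ ball (0 : ℂ) r, ∀ q ∈ ball (0 : ℂ) r, (s, q) ∈ ball (0 : ℂ × ℂ) r :=
    fun s hs q hq ↦ mk_mem_ball_zero_iff.2 ⟨hs, hq⟩
  have bound_fst : ∀ s ∈ ball (0 : ℂ) r, ∀ q ∈ ball (0 : ℂ) r, ‖f (s, q)‖ ≤ M / r * ‖s‖ :=
    fun s hs q hq ↦ norm_le_div_mul_norm_of_apply_zero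
      (hf.comp (by fun_prop) fun s' hs' ↦ hmem s' hs' q hq) (hp q hq)
      (fun s' hs' ↦ hM _ (hmem s' hs' q hq)) hs
  obtain ⟨hz₁, hz₂⟩ := mk_mem_ball_zero_iff.1 hz
  calc ‖f z‖ ≤ M / r * ‖z.1‖ / r * ‖z.2‖ :=
        norm_le_div_mul_norm_of_apply_zero (hf.comp (by fun_prop) fun q hq ↦ hmem _ hz₁ q hq)
          (hs _ hz₁) (fun q hq ↦ bound_fst _ hz₁ q hq) hz₂
    _ = M / r / r * (‖z.1‖ * ‖z.2‖) := by ring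

namespace IsWeightedHomogeneousOn

variable {f : ℂ × ℂ → ℂ} {d : ℕ}

lemma apply_mk_zero (hf : IsWeightedHomogeneousOn f d G2) {s : ℂ} (hs : ‖s‖ ≤ 8⁻¹) :
    f (s, 0) = 8 ^ d * f (8⁻¹, 0) * s ^ d := by
  have h := hf (8⁻¹, 0) (mem_G2_of_norm_lt (by norm_num) (by norm_num)) (8 * s)
    (by rw [norm_mul]; norm_num; linarith)
  simp only [weightedSMul, mul_zero] at h
  rw [show 8 * s * 8⁻¹ = s by ring] at h
  rw [h]
  ring

lemma apply_zero_mk_of_even {k : ℕ} (hf : IsWeightedHomogeneousOn f (2 * k) G2) {p : ℂ}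
    (hp : ‖p‖ ≤ 8⁻¹) : f (0, p) = (8 * p) ^ k * f (0, 8⁻¹) := by
  obtain ⟨w, hw⟩ := IsAlgClosed.exists_pow_nat_eq (8 * p) two_pos
  have hw1 : ‖w‖ ≤ 1 := by
    refine (pow_le_one_iff_of_nonneg (norm_nonneg w) two_ne_zero).1 ?_
    rw [← norm_pow, hw, norm_mul]
    norm_num
    linarith
  have h := hf (0, 8⁻¹) (mem_G2_of_norm_lt (by norm_num) (by norm_num)) w hw1
  simp only [weightedSMul, mul_zero, hw, pow_mul] at h
  rwa [show 8 * p * 8⁻¹ = p by ring] at h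

lemma apply_zero_mk_of_odd {D : Set (ℂ × ℂ)} (hf : IsWeightedHomogeneousOn f d D) (hd : Odd d)
    {p : ℂ} (hp : (0, p) ∈ D) : f (0, p) = 0 := by
  have h := hf (0, p) hp (-1) (by norm_num)
  simp only [weightedSMul, mul_zero, neg_one_sq, one_mul, hd.neg_one_pow, neg_one_mul] at h
  exact self_eq_neg.1 h

lemma eqOn_zero_of_norm_le_mul_norm_mul_norm {D : Set (ℂ × ℂ)} {r K : ℝ}
    (hf : IsWeightedHomogeneousOn f d D) (hd : d < 3) (hr : 0 < r)
    (hK : ∀ z ∈ ball 0 r, ‖f z‖ ≤ K * (‖z.1‖ * ‖z.2‖)) : EqOn f 0 D := by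
  intro z hz
  set A := K * (‖z.1‖ * ‖z.2‖)
  have small : ∀ᶠ t : ℝ in 𝓝[>] 0, weightedSMul t z ∈ ball 0 r ∧ t ≤ 1 := by
    refine (Eventually.and ?_ (Iic_mem_nhds one_pos)).filter_mono nhdsWithin_le_nhds
    have hcont : Continuous fun t : ℝ ↦ weightedSMul t z :=
      (differentiable_weightedSMul z).continuous.comp Complex.continuous_ofReal
    have h0 : weightedSMul ((0 : ℝ) : ℂ) z = 0 := by simp [weightedSMul]
    exact hcont.continuousAt.preimage_mem_nhds (h0 ▸ ball_mem_nhds _ hr)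
  have hbound : ∀ᶠ t : ℝ in 𝓝[>] 0, ‖f z‖ ≤ t ^ (3 - d) * A := by
    filter_upwards [small, self_mem_nhdsWithin] with t ⟨hmem, ht1⟩ (ht0 : 0 < t)
    have hnorm : ‖(t : ℂ)‖ = t := by simp [ht0.le]
    have key := hK _ hmem
    rw [hf z hz t (hnorm.le.trans ht1)] at key
    simp only [weightedSMul, norm_mul, norm_pow, hnorm] at key
    refine le_of_mul_le_mul_left ?_ (pow_pos ht0 d)
    calc t ^ d * ‖f z‖ ≤ K * (t * ‖z.1‖ * (t ^ 2 * ‖z.2‖)) := key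
      _ = t ^ 3 * A := by ring
      _ = t ^ d * (t ^ (3 - d) * A) := by
        rw [← mul_assoc (t ^ d), ← pow_add, Nat.add_sub_cancel' hd.le]
  have hlim : Tendsto (fun t : ℝ ↦ t ^ (3 - d) * A) (𝓝[>] 0) (𝓝 0) := by
    have := ((continuous_pow (3 - d)).mul continuous_const).tendsto (0 : ℝ)
      (f := fun t ↦ t ^ (3 - d) * A)
    simpa [zero_pow (Nat.sub_ne_zero_of_lt hd)] using this.mono_left nhdsWithin_le_nhds
  exact norm_le_zero_iff.1 (ge_of_tendsto hlim hbound)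

lemma eqOn_zero_of_eq_zero_on_axes (hf : IsWeightedHomogeneousOn f d G2)
    (hdiff : DifferentiableOn ℂ f G2) (hd : d < 3) (hs : ∀ s ∈ ball (0 : ℂ) 8⁻¹, f (s, 0) = 0)
    (hp : ∀ p ∈ ball (0 : ℂ) 8⁻¹, f (0, p) = 0) : EqOn f 0 G2 := by
  have hball : ball (0 : ℂ × ℂ) 8⁻¹ ⊆ G2 := ball_subset_closedBall.trans closedBall_subset_G2
  obtain ⟨M, hM⟩ := (isCompact_closedBall (0 : ℂ × ℂ) 8⁻¹).exists_bound_of_continuousOn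
    (hdiff.continuousOn.mono closedBall_subset_G2)
  exact hf.eqOn_zero_of_norm_le_mul_norm_mul_norm hd (by norm_num) fun z hz ↦
    norm_le_mul_norm_mul_norm_of_eq_zero_on_axes (hdiff.mono hball)
      (fun w hw ↦ hM w (ball_subset_closedBall hw)) hs hp hz

lemma exists_eq_mul_fst (hf : IsWeightedHomogeneousOn f 1 G2)
    (hdiff : DifferentiableOn ℂ f G2) : ∃ a : ℂ, ∀ z ∈ G2, f z = a * z.1 := by
  have hu : EqOn (fun z ↦ f z - 8 * f (8⁻¹, 0) * z.1) 0 G2 := by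
    refine eqOn_zero_of_eq_zero_on_axes (d := 1) (fun z hz τ hτ ↦ ?_) (by fun_prop)
      (by norm_num) (fun s hs ↦ ?_) (fun p hp ↦ ?_)
    · rw [hf z hz τ hτ, weightedSMul_fst]
      ring
    · simp [hf.apply_mk_zero (mem_ball_zero_iff.1 hs).le]
    · have hp' : (0, p) ∈ G2 := closedBall_subset_G2 <| ball_subset_closedBall <|
        mk_mem_ball_zero_iff.2 ⟨mem_ball_self (by norm_num), hp⟩
      simp [hf.apply_zero_mk_of_odd odd_one hp']
  exact ⟨_, fun z hz ↦ sub_eq_zero.1 (hu hz)⟩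

lemma exists_eq_mul_snd_add_mul_fst_sq (hf : IsWeightedHomogeneousOn f 2 G2)
    (hdiff : DifferentiableOn ℂ f G2) :
    ∃ b C : ℂ, ∀ z ∈ G2, f z = b * z.2 + C * z.1 ^ 2 := by
  have hv : EqOn (fun z ↦ f z - 8 * f (0, 8⁻¹) * z.2 - 64 * f (8⁻¹, 0) * z.1 ^ 2) 0 G2 := by
    refine eqOn_zero_of_eq_zero_on_axes (d := 2) (fun z hz τ hτ ↦ ?_) (by fun_prop)
      (by norm_num) (fun s hs ↦ ?_) (fun p hp ↦ ?_)
    · rw [hf z hz τ hτ, weightedSMul_fst, weightedSMul_snd]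
      ring
    · simp [hf.apply_mk_zero (mem_ball_zero_iff.1 hs).le]
      ring
    · simp [apply_zero_mk_of_even (k := 1) hf (mem_ball_zero_iff.1 hp).le]
      ring
  exact ⟨_, _, fun z hz ↦ eq_add_of_sub_eq' (sub_eq_zero.1 (hv hz))⟩

end IsWeightedHomogeneousOn

/-- a holomorphic map `F = (S, P) : G₂ → ℂ²` equivariant under all
rotations (`S(τs,τ²p) = τS(s,p)`, `P(τs,τ²p) = τ²P(s,p)` for `|τ| = 1`) has the form
`S(s,p) = a·s`, `P(s,p) = b·p + C·s²`. -/
theorem equivariant_map_form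
    (S P : ℂ × ℂ → ℂ)
    (hS : DifferentiableOn ℂ S G2) (hP : DifferentiableOn ℂ P G2)
    (hequiv : ∀ z ∈ G2, ∀ τ : ℂ, ‖τ‖ = 1 →
      S (τ * z.1, τ ^ 2 * z.2) = τ * S z ∧
      P (τ * z.1, τ ^ 2 * z.2) = τ ^ 2 * P z) :
    ∃ a b C : ℂ, ∀ z ∈ G2, S z = a * z.1 ∧ P z = b * z.2 + C * z.1 ^ 2 := by
  have hD : ∀ z ∈ G2, ∀ τ : ℂ, ‖τ‖ ≤ 1 → weightedSMul τ z ∈ G2 :=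
    fun _ hz _ ↦ weightedSMul_mem_G2 hz
  have hS₁ : IsWeightedHomogeneousOn S 1 G2 := isWeightedHomogeneousOn_of_norm_eq_one hD hS
    fun z hz τ hτ ↦ (pow_one τ).symm ▸ (hequiv z hz τ hτ).1
  have hP₂ : IsWeightedHomogeneousOn P 2 G2 := isWeightedHomogeneousOn_of_norm_eq_one hD hP
    fun z hz τ hτ ↦ (hequiv z hz τ hτ).2
  obtain ⟨a, ha⟩ := hS₁.exists_eq_mul_fst hS
  obtain ⟨b, C, hbC⟩ := hP₂.exists_eq_mul_snd_add_mul_fst_sq hP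
  exact ⟨a, b, C, fun z hz ↦ ⟨ha z hz, hbC z hz⟩⟩
end
end
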